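/- arXiv:2602.23322 — 6 statements merged into one kernel-verified Lean document; each statement's English description precedes it below -/
import Mathlib

section
/- Let E be a real normed vector space, let Y ⊆ E be a compact subset, let U ⊆ E be an open set with Y ⊆ U, let C > 0, and let π : U → E be a C-Lipschitz map with π(u) ∈ Y for all u ∈ U and π(y) = y for all y ∈ Y. Let X be a compact metric space and let f : X → E be a continuous map with f(X) ⊆ Y. Then for every ε > 0 there exists a Lipschitz map g : X → E with g(X) ⊆ Y and ‖f(x) − g(x)‖ < ε for every x ∈ X. -/
open Metric Set
open scoped NNReal Topology

/-- **Lemma 2.1 (Lipschitz approximation).** Let `Y` be a compact subset of a normed space `E`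
that admits a `C`-Lipschitz retraction `π` of an open neighborhood `U` onto `Y`. Then every
continuous map `f` from a compact metric space `X` into `Y` can be approximated uniformly by
Lipschitz maps `g : X → Y`. -/
theorem lipschitz_approximation_of_continuous_into_retract
    {E : Type*} [NormedAddCommGroup E] [NormedSpace ℝ E]
    (Y : Set E) (hYcpt : IsCompact Y)
    (U : Set E) (hUopen : IsOpen U) (hYU : Y ⊆ U)
    (C : ℝ≥0) (hC : 0 < C)
    (π : E → E) (hπlip : LipschitzOnWith C π U)
    (hπY : ∀ u ∈ U, π u ∈ Y) (hπid : ∀ y ∈ Y, π y = y)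
    {X : Type*} [MetricSpace X] [CompactSpace X]
    (f : X → E) (hf : Continuous f) (hfY : ∀ x, f x ∈ Y)
    (ε : ℝ) (hε : 0 < ε) :
    ∃ g : X → E, (∃ K : ℝ≥0, LipschitzWith K g) ∧ (∀ x, g x ∈ Y) ∧
      ∀ x, ‖f x - g x‖ < ε := by
  classical
  cases isEmpty_or_nonempty X with
  | inl h =>
      exact ⟨f, ⟨0, fun x => isEmptyElim x⟩, hfY, fun x => isEmptyElim x⟩
  | inr hX =>
  obtain ⟨δ, hδ, hthick⟩ := hYcpt.exists_thickening_subset_open hUopen hYU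
  set ε' : ℝ := min δ (ε / C) with hε'def
  have hε' : 0 < ε' := lt_min hδ (div_pos hε (by exact_mod_cast hC))
  -- uniform continuity
  have huc : UniformContinuous f := CompactSpace.uniformContinuous_of_continuous hf
  obtain ⟨r, hr, hmod⟩ := Metric.uniformContinuous_iff.1 huc (ε' / 2) (by positivity)
  -- finite subcover by balls of radius r/2
  obtain ⟨t, ht⟩ := isCompact_univ.elim_finite_subcover (fun i : X => ball i (r / 2))
    (fun i => isOpen_ball) (fun x _ => mem_iUnion.2 ⟨x, mem_ball_self (by positivity)⟩)
  -- bump functions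
  set φ : X → X → ℝ := fun i x => max (r - dist x i) 0 with hφdef
  set S : X → ℝ := fun x => ∑ i ∈ t, φ i x with hSdef
  have hφnonneg : ∀ i x, 0 ≤ φ i x := fun i x => le_max_right _ _
  have hφle : ∀ i x, φ i x ≤ r := fun i x => by
    simp only [hφdef]
    exact max_le (by linarith [dist_nonneg (x := x) (y := i)]) hr.le
  have hφlip : ∀ i x y, |φ i x - φ i y| ≤ dist x y := by
    intro i x y
    have h1 : |(r - dist x i) - (r - dist y i)| ≤ dist x y := by
      rw [show (r - dist x i) - (r - dist y i) = dist y i - dist x i by ring]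
      exact abs_dist_sub_le y x i |>.trans_eq (dist_comm y x)
    calc |φ i x - φ i y| ≤ |(r - dist x i) - (r - dist y i)| := by
          exact abs_max_sub_max_le_abs _ _ _
      _ ≤ dist x y := h1
  have hScard : ∀ x, S x ≤ t.card * r := fun x => by
    calc S x ≤ ∑ _i ∈ t, r := Finset.sum_le_sum fun i _ => hφle i x
      _ = t.card * r := by simp [mul_comm]
  have hSlb : ∀ x, r / 2 ≤ S x := by
    intro x
    obtain ⟨i, hit, hxi⟩ := mem_iUnion₂.1 (ht (mem_univ x))
    have : r / 2 ≤ φ i x := by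
      have := mem_ball.1 hxi
      simp only [hφdef]
      have : r / 2 ≤ r - dist x i := by linarith
      exact le_max_of_le_left this
    calc r / 2 ≤ φ i x := this
      _ ≤ S x := Finset.single_le_sum (fun j _ => hφnonneg j x) hit
  have hSpos : ∀ x, 0 < S x := fun x => lt_of_lt_of_le (by positivity) (hSlb x)
  have hSlip : ∀ x y, |S x - S y| ≤ t.card * dist x y := by
    intro x y
    rw [hSdef, ← Finset.sum_sub_distrib]
    calc |∑ i ∈ t, (φ i x - φ i y)| ≤ ∑ i ∈ t, |φ i x - φ i y| :=
          Finset.abs_sum_le_sum_abs _ _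
      _ ≤ ∑ _i ∈ t, dist x y := Finset.sum_le_sum fun i _ => hφlip i x y
      _ = t.card * dist x y := by simp [mul_comm]
  -- weights
  set w : X → X → ℝ := fun i x => φ i x / S x with hwdef
  have hwnonneg : ∀ i x, 0 ≤ w i x := fun i x => div_nonneg (hφnonneg i x) (hSpos x).le
  have hwsum : ∀ x, ∑ i ∈ t, w i x = 1 := fun x => by
    simp only [hwdef, ← Finset.sum_div]
    exact div_self (hSpos x).ne'
  -- the Lipschitz bound on weights
  set N : ℝ := (t.card : ℝ) with hNdef
  have hN0 : (0:ℝ) ≤ N := by positivity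
  have hwlip : ∀ i x y, |w i x - w i y| ≤ 8 * N / r * dist x y := by
    intro i x y
    have hSx := hSpos x; have hSy := hSpos y
    have key : w i x - w i y = (φ i x * S y - φ i y * S x) / (S x * S y) := by
      field_simp [hwdef]
      simp only [hwdef]
      field_simp
    rw [key, abs_div, abs_of_pos (mul_pos hSx hSy)]
    have hnum : |φ i x * S y - φ i y * S x| ≤ 2 * N * r * dist x y := by
      have h1 : φ i x * S y - φ i y * S x
          = (φ i x - φ i y) * S y + φ i y * (S y - S x) := by ring
      rw [h1]
      calc |(φ i x - φ i y) * S y + φ i y * (S y - S x)|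
          ≤ |(φ i x - φ i y) * S y| + |φ i y * (S y - S x)| := abs_add_le _ _
        _ = |φ i x - φ i y| * S y + φ i y * |S y - S x| := by
            rw [abs_mul, abs_mul, abs_of_pos hSy, abs_of_nonneg (hφnonneg i y)]
        _ ≤ dist x y * (N * r) + r * (N * dist y x) := by
            gcongr
            · exact hφlip i x y
            · exact hScard y
            · exact hφle i y
            · exact hSlip y x
        _ = 2 * N * r * dist x y := by rw [dist_comm y x]; ring
    have hden : r / 2 * (r / 2) ≤ S x * S y :=
      mul_le_mul (hSlb x) (hSlb y) (by positivity) (hSx.le)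
    calc |φ i x * S y - φ i y * S x| / (S x * S y)
        ≤ (2 * N * r * dist x y) / (r / 2 * (r / 2)) := by
          apply div_le_div₀ (by positivity) hnum (by positivity) hden
      _ = 8 * N / r * dist x y := by field_simp; ring
  -- the approximating map before retraction
  set g0 : X → E := fun x => ∑ i ∈ t, w i x • f i with hg0def
  -- bound on ‖f i‖
  obtain ⟨M, hM⟩ := hYcpt.isBounded.exists_norm_le
  have hM0 : 0 ≤ M := le_trans (norm_nonneg _) (hM _ (hfY (Classical.arbitrary X)))
  -- g0 is Lipschitz
  set K0 : ℝ := 8 * N / r * (N * M) with hK0def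
  have hK00 : 0 ≤ K0 := by positivity
  have hg0lip : ∀ x y, dist (g0 x) (g0 y) ≤ K0 * dist x y := by
    intro x y
    rw [dist_eq_norm, hg0def]
    simp only
    rw [← Finset.sum_sub_distrib]
    calc ‖∑ i ∈ t, (w i x • f i - w i y • f i)‖
        ≤ ∑ i ∈ t, ‖w i x • f i - w i y • f i‖ := norm_sum_le _ _
      _ = ∑ i ∈ t, |w i x - w i y| * ‖f i‖ := by
          refine Finset.sum_congr rfl fun i _ => ?_
          rw [← sub_smul, norm_smul, Real.norm_eq_abs]
      _ ≤ ∑ _i ∈ t, 8 * N / r * dist x y * M := by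
          refine Finset.sum_le_sum fun i _ => ?_
          exact mul_le_mul (hwlip i x y) (hM _ (hfY i)) (norm_nonneg _) (by positivity)
      _ = K0 * dist x y := by
          rw [Finset.sum_const, nsmul_eq_mul, hK0def, ← hNdef]; ring
  -- closeness of g0 to f
  have hclose : ∀ x, ‖f x - g0 x‖ ≤ ε' / 2 := by
    intro x
    have hfx : f x = ∑ i ∈ t, w i x • f x := by
      rw [← Finset.sum_smul, hwsum, one_smul]
    calc ‖f x - g0 x‖ = ‖∑ i ∈ t, (w i x • f x - w i x • f i)‖ := by
          rw [Finset.sum_sub_distrib, ← hfx]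
      _ ≤ ∑ i ∈ t, ‖w i x • f x - w i x • f i‖ := norm_sum_le _ _
      _ = ∑ i ∈ t, w i x * ‖f x - f i‖ := by
          refine Finset.sum_congr rfl fun i _ => ?_
          rw [← smul_sub, norm_smul, Real.norm_eq_abs, abs_of_nonneg (hwnonneg i x)]
      _ ≤ ∑ i ∈ t, w i x * (ε' / 2) := by
          refine Finset.sum_le_sum fun i _ => ?_
          rcases eq_or_lt_of_le (hφnonneg i x) with h0 | hpos
          · have : w i x = 0 := by simp [hwdef, ← h0]
            simp [this]
          · have hdist : dist x i < r := by
              by_contra hcon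
              push_neg at hcon
              have : φ i x = 0 := by
                simp only [hφdef]
                exact max_eq_right (by linarith)
              rw [this] at hpos; exact lt_irrefl 0 hpos
            have : dist (f x) (f i) < ε' / 2 := hmod hdist
            have h2 : ‖f x - f i‖ ≤ ε' / 2 := by
              rw [← dist_eq_norm]; exact this.le
            exact mul_le_mul_of_nonneg_left h2 (hwnonneg i x)
      _ = ε' / 2 := by rw [← Finset.sum_mul, hwsum, one_mul]
  -- g0 maps into U
  have hg0U : ∀ x, g0 x ∈ U := by
    intro x
    apply hthick
    rw [mem_thickening_iff]
    refine ⟨f x, hfY x, ?_⟩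
    rw [dist_eq_norm, ← norm_neg]
    simp only [neg_sub]
    calc ‖f x - g0 x‖ ≤ ε' / 2 := hclose x
      _ < ε' := by linarith
      _ ≤ δ := min_le_left _ _
  -- final map
  refine ⟨π ∘ g0, ⟨C * K0.toNNReal, ?_⟩, fun x => hπY _ (hg0U x), ?_⟩
  · apply LipschitzWith.of_dist_le_mul
    intro x y
    calc dist (π (g0 x)) (π (g0 y)) ≤ C * dist (g0 x) (g0 y) :=
          hπlip.dist_le_mul _ (hg0U x) _ (hg0U y)
      _ ≤ C * (K0 * dist x y) := by
          exact mul_le_mul_of_nonneg_left (hg0lip x y) C.coe_nonneg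
      _ = ↑(C * K0.toNNReal) * dist x y := by
          push_cast
          rw [Real.coe_toNNReal _ hK00]; ring
  · intro x
    have hfxU : f x ∈ U := hYU (hfY x)
    have h1 : π (f x) = f x := hπid _ (hfY x)
    calc ‖f x - π (g0 x)‖ = dist (π (f x)) (π (g0 x)) := by
          rw [h1, dist_eq_norm]
      _ ≤ C * dist (f x) (g0 x) := hπlip.dist_le_mul _ hfxU _ (hg0U x)
      _ ≤ C * (ε' / 2) := by
          refine mul_le_mul_of_nonneg_left ?_ C.coe_nonneg
          rw [dist_eq_norm]; exact hclose x
      _ < ε := by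
          have h2 : ε' ≤ ε / C := min_le_right _ _
          have hCpos : (0:ℝ) < C := by exact_mod_cast hC
          have : (C : ℝ) * (ε' / 2) ≤ C * (ε / C / 2) := by
            apply mul_le_mul_of_nonneg_left (by linarith) hCpos.le
          calc (C:ℝ) * (ε' / 2) ≤ C * (ε / C / 2) := this
            _ = ε / 2 := by field_simp
            _ < ε := by linarith
end

section
/- Let E be a real normed vector space, let Y ⊆ E be a compact subset, let ε > 0 and C > 0, and let π : N_ε(Y) → E be a C-Lipschitz map defined on the open ε-neighborhood N_ε(Y) = {u ∈ E : d(u,Y) < ε} of Y, with π(u) ∈ Y for all u ∈ N_ε(Y) and π(y) = y for all y ∈ Y. Let X be a compact metric space and let f, g : X → E be Lipschitz maps with f(X) ⊆ Y and g(X) ⊆ Y, and set δ = sup_{x∈X} ‖f(x) − g(x)‖. If δ < ε, then there exists a Lipschitz map H : [0,1] × X → E (with respect to the product metric) such that H(0,x) = f(x) and H(1,x) = g(x) for every x ∈ X, H(t,x) ∈ Y for all (t,x), and ‖H(t,x) − f(x)‖ ≤ C·δ for every x ∈ X and every t ∈ [0,1]. -/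
open Metric Set
open scoped NNReal Topology

/-- **Lemma 2.2 (controlled Lipschitz homotopies).** Let `Y` be a compact subset of a normed
space `E` admitting a `C`-Lipschitz retraction `π` of the open `ε`-neighborhood of `Y` onto
`Y`. If `f, g : X → Y` are Lipschitz maps from a compact metric space with uniform distance
`δ = sup_x ‖f x − g x‖ < ε`, then there is a Lipschitz homotopy `H : [0,1] × X → Y` between
`f` and `g` with `‖H(t,x) − f(x)‖ ≤ C δ` for all `t ∈ [0,1]` and `x ∈ X`. -/
theorem controlled_lipschitz_homotopy_of_close_maps
    {E : Type*} [NormedAddCommGroup E] [NormedSpace ℝ E]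
    (Y : Set E) (hYcpt : IsCompact Y)
    (ε : ℝ) (hε : 0 < ε)
    (C : ℝ≥0) (hC : 0 < C)
    (π : E → E) (hπlip : LipschitzOnWith C π (Metric.thickening ε Y))
    (hπY : ∀ u ∈ Metric.thickening ε Y, π u ∈ Y) (hπid : ∀ y ∈ Y, π y = y)
    {X : Type*} [MetricSpace X] [CompactSpace X]
    (f g : X → E)
    (hf : ∃ K : ℝ≥0, LipschitzWith K f) (hg : ∃ K : ℝ≥0, LipschitzWith K g)
    (hfY : ∀ x, f x ∈ Y) (hgY : ∀ x, g x ∈ Y)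
    (δ : ℝ) (hδ : δ = ⨆ x, ‖f x - g x‖) (hδε : δ < ε) :
    ∃ H : ℝ × X → E,
      (∃ K : ℝ≥0, LipschitzOnWith K H (Set.Icc (0:ℝ) 1 ×ˢ (Set.univ : Set X))) ∧
      (∀ x, H (0, x) = f x) ∧ (∀ x, H (1, x) = g x) ∧
      (∀ t ∈ Set.Icc (0:ℝ) 1, ∀ x, H (t, x) ∈ Y) ∧
      (∀ t ∈ Set.Icc (0:ℝ) 1, ∀ x, ‖H (t, x) - f x‖ ≤ (C : ℝ) * δ) := by
  rcases isEmpty_or_nonempty X with hX | hX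
  · refine ⟨fun _ => 0, ⟨0, fun p _ q _ => by simp⟩,
      fun x => hX.elim x, fun x => hX.elim x,
      fun t ht x => hX.elim x, fun t ht x => hX.elim x⟩
  · obtain ⟨Kf, hKf⟩ := hf
    obtain ⟨Kg, hKg⟩ := hg
    have hbdd : BddAbove (Set.range fun x => ‖f x - g x‖) :=
      (isCompact_range ((hKf.continuous.sub hKg.continuous).norm)).bddAbove
    have hδnorm : ∀ x, ‖f x - g x‖ ≤ δ := by
      intro x; rw [hδ]; exact le_ciSup hbdd x
    obtain ⟨x0⟩ := hX
    have hδ0 : 0 ≤ δ := le_trans (norm_nonneg _) (hδnorm x0)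
    set φ : ℝ × X → E := fun p => (1 - p.1) • f p.2 + p.1 • g p.2 with hφ
    have hφf : ∀ t, t ∈ Set.Icc (0:ℝ) 1 → ∀ x, ‖φ (t, x) - f x‖ ≤ t * δ := by
      intro t ht x
      have hid : (1 - t) • f x + t • g x - f x = t • (g x - f x) := by module
      have : ‖φ (t, x) - f x‖ = t * ‖g x - f x‖ := by
        simp only [hφ, hid, norm_smul, Real.norm_eq_abs, abs_of_nonneg ht.1]
      rw [this, norm_sub_rev]
      exact mul_le_mul_of_nonneg_left (hδnorm x) ht.1
    have hφmem : ∀ t, t ∈ Set.Icc (0:ℝ) 1 → ∀ x, φ (t, x) ∈ Metric.thickening ε Y := by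
      intro t ht x
      rw [Metric.mem_thickening_iff]
      refine ⟨f x, hfY x, ?_⟩
      rw [dist_eq_norm]
      calc ‖φ (t, x) - f x‖ ≤ t * δ := hφf t ht x
        _ ≤ 1 * δ := mul_le_mul_of_nonneg_right ht.2 hδ0
        _ = δ := one_mul δ
        _ < ε := hδε
    have hπd : ∀ u ∈ Metric.thickening ε Y, ∀ v ∈ Metric.thickening ε Y,
        dist (π u) (π v) ≤ (C : ℝ) * dist u v := by
      intro u hu v hv
      exact (lipschitzOnWith_iff_dist_le_mul.mp hπlip) u hu v hv
    refine ⟨π ∘ φ, ?_, ?_, ?_, ?_, ?_⟩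
    · -- Lipschitz
      set MK : ℝ := max (Kf : ℝ) (Kg : ℝ) with hMK
      have hMK0 : 0 ≤ MK := le_max_of_le_left Kf.2
      refine ⟨C * Real.toNNReal (MK + δ), lipschitzOnWith_iff_dist_le_mul.mpr ?_⟩
      rintro ⟨t, x⟩ hp ⟨s, y⟩ hq
      rw [Set.mem_prod] at hp hq
      have ht := hp.1; have hs := hq.1
      have hφd : dist (φ (t, x)) (φ (s, y)) ≤ (MK + δ) * dist (t, x) (s, y) := by
        have hid : φ (t, x) - φ (s, y)
            = (1 - t) • (f x - f y) + t • (g x - g y) + (t - s) • (g y - f y) := by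
          simp only [hφ]; module
        have h1 : ‖(1 - t) • (f x - f y)‖ ≤ (1 - t) * ((Kf : ℝ) * dist x y) := by
          rw [norm_smul, Real.norm_eq_abs, abs_of_nonneg (by linarith [ht.2] : (0:ℝ) ≤ 1 - t)]
          exact mul_le_mul_of_nonneg_left (by rw [← dist_eq_norm]; exact hKf.dist_le_mul x y)
            (by linarith [ht.2])
        have h2 : ‖t • (g x - g y)‖ ≤ t * ((Kg : ℝ) * dist x y) := by
          rw [norm_smul, Real.norm_eq_abs, abs_of_nonneg ht.1]
          exact mul_le_mul_of_nonneg_left (by rw [← dist_eq_norm]; exact hKg.dist_le_mul x y) ht.1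
        have h3 : ‖(t - s) • (g y - f y)‖ ≤ |t - s| * δ := by
          rw [norm_smul, Real.norm_eq_abs, norm_sub_rev]
          exact mul_le_mul_of_nonneg_left (hδnorm y) (abs_nonneg _)
        have hdp : dist ((t, x) : ℝ × X) (s, y) = max (dist t s) (dist x y) := Prod.dist_eq
        have hts : |t - s| ≤ dist ((t, x) : ℝ × X) (s, y) := by
          rw [hdp]; exact le_max_of_le_left (le_of_eq (Real.dist_eq t s).symm)
        have hxy : dist x y ≤ dist ((t, x) : ℝ × X) (s, y) := by
          rw [hdp]; exact le_max_right _ _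
        have hconv : (1 - t) * ((Kf : ℝ) * dist x y) + t * ((Kg : ℝ) * dist x y)
            ≤ MK * dist x y := by
          have h4 : (Kf : ℝ) ≤ MK := le_max_left _ _
          have h5 : (Kg : ℝ) ≤ MK := le_max_right _ _
          have hd0 : 0 ≤ dist x y := dist_nonneg
          have hA : (1 - t) * ((Kf : ℝ) * dist x y) ≤ (1 - t) * (MK * dist x y) :=
            mul_le_mul_of_nonneg_left (mul_le_mul_of_nonneg_right h4 hd0) (by linarith [ht.2])
          have hB : t * ((Kg : ℝ) * dist x y) ≤ t * (MK * dist x y) :=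
            mul_le_mul_of_nonneg_left (mul_le_mul_of_nonneg_right h5 hd0) ht.1
          nlinarith
        calc dist (φ (t, x)) (φ (s, y)) = ‖φ (t, x) - φ (s, y)‖ := dist_eq_norm _ _
          _ = ‖(1 - t) • (f x - f y) + t • (g x - g y) + (t - s) • (g y - f y)‖ := by rw [hid]
          _ ≤ ‖(1 - t) • (f x - f y) + t • (g x - g y)‖ + ‖(t - s) • (g y - f y)‖ :=
              norm_add_le _ _
          _ ≤ (‖(1 - t) • (f x - f y)‖ + ‖t • (g x - g y)‖) + ‖(t - s) • (g y - f y)‖ := by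
              gcongr; exact norm_add_le _ _
          _ ≤ MK * dist x y + |t - s| * δ := by
              have := add_le_add (add_le_add h1 h2) h3
              linarith [hconv]
          _ ≤ MK * dist ((t, x) : ℝ × X) (s, y) + dist ((t, x) : ℝ × X) (s, y) * δ := by
              gcongr
          _ = (MK + δ) * dist ((t, x) : ℝ × X) (s, y) := by ring
      have hmem1 := hφmem t ht x
      have hmem2 := hφmem s hs y
      calc dist ((π ∘ φ) (t, x)) ((π ∘ φ) (s, y))
          ≤ (C : ℝ) * dist (φ (t, x)) (φ (s, y)) := hπd _ hmem1 _ hmem2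
        _ ≤ (C : ℝ) * ((MK + δ) * dist ((t, x) : ℝ × X) (s, y)) := by
            exact mul_le_mul_of_nonneg_left hφd C.2
        _ = ((C * Real.toNNReal (MK + δ) : ℝ≥0) : ℝ) * dist ((t, x) : ℝ × X) (s, y) := by
            push_cast
            rw [Real.coe_toNNReal _ (by linarith)]
            ring
    · intro x
      have : φ (0, x) = f x := by simp [hφ]
      simp only [Function.comp_apply, this]
      exact hπid _ (hfY x)
    · intro x
      have : φ (1, x) = g x := by simp [hφ]
      simp only [Function.comp_apply, this]
      exact hπid _ (hgY x)
    · intro t ht x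
      exact hπY _ (hφmem t ht x)
    · intro t ht x
      have hfx : f x ∈ Metric.thickening ε Y := by
        rw [Metric.mem_thickening_iff]
        exact ⟨f x, hfY x, by simpa using hε⟩
      have h1 : π (f x) = f x := hπid _ (hfY x)
      calc ‖(π ∘ φ) (t, x) - f x‖ = dist (π (φ (t, x))) (π (f x)) := by
            rw [h1, dist_eq_norm]; rfl
        _ ≤ (C : ℝ) * dist (φ (t, x)) (f x) := hπd _ (hφmem t ht x) _ hfx
        _ ≤ (C : ℝ) * δ := by
            rw [dist_eq_norm]
            refine mul_le_mul_of_nonneg_left ?_ C.2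
            calc ‖φ (t, x) - f x‖ ≤ t * δ := hφf t ht x
              _ ≤ 1 * δ := mul_le_mul_of_nonneg_right ht.2 hδ0
              _ = δ := one_mul δ
end

section
/- For every n ≥ 1, L ≥ 1 and λ ≥ 1 there exists a constant C > 0 with the following property. Let R > 0, let X be a metric space, let B ⊆ X be a (λ,R)-linearly locally contractible subset, let K ⊆ ℝⁿ be a nonempty compact set, and let φ : K → X be a map with L⁻¹‖a−b‖ ≤ d(φ(a),φ(b)) ≤ L‖a−b‖ for all a,b ∈ K and φ(K) ⊆ B. Then there exist an open set U ⊆ ℝⁿ with K ⊆ U and a continuous map φ̄ : U → X such that φ̄(a) = φ(a) for all a ∈ K and d(φ(x), φ̄(y)) ≤ C‖x − y‖ for every x ∈ K and every y ∈ U. -/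
open Metric Set
open scoped NNReal Topology

universe u

/-- The ball `B(x,r)` is contractible within `B(x,ρ)`: there are a point `p` and a continuous
homotopy `H : [0,1] × B(x,r) → X` from the inclusion to the constant map `p`, staying in
`B(x,ρ)`. -/
def BallContractibleWithin {X : Type*} [MetricSpace X] (x : X) (r ρ : ℝ) : Prop :=
  ∃ p : X, ∃ H : ℝ × X → X,
    ContinuousOn H (Set.Icc (0:ℝ) 1 ×ˢ Metric.ball x r) ∧
    (∀ y ∈ Metric.ball x r, H (0, y) = y) ∧
    (∀ y ∈ Metric.ball x r, H (1, y) = p) ∧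
    (∀ t ∈ Set.Icc (0:ℝ) 1, ∀ y ∈ Metric.ball x r, H (t, y) ∈ Metric.ball x ρ)

/-- A subset `B` of a metric space is `(λ,R)`-linearly locally contractible if for every
`x ∈ B` and `0 < r < R` the ball `B(x,r)` is contractible within `B(x, λ r)`. -/
def IsLLCSubset {X : Type*} [MetricSpace X] (lam R : ℝ) (B : Set X) : Prop :=
  ∀ x ∈ B, ∀ r : ℝ, 0 < r → r < R → BallContractibleWithin x r (lam * r)

open Filter

noncomputable section

namespace LLCExt

/-! ### Scalar bump functions -/

/-- clamp to `[0,1]` -/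
def c01 (t : ℝ) : ℝ := max 0 (min 1 t)

lemma c01_mem (t : ℝ) : c01 t ∈ Set.Icc (0:ℝ) 1 :=
  ⟨le_max_left _ _, max_le (by norm_num) (min_le_left _ _)⟩

lemma c01_nonneg (t : ℝ) : 0 ≤ c01 t := (c01_mem t).1
lemma c01_le_one (t : ℝ) : c01 t ≤ 1 := (c01_mem t).2

lemma c01_eq_one {t : ℝ} (h : 1 ≤ t) : c01 t = 1 := by
  simp [c01, min_eq_left h]

lemma c01_eq_zero {t : ℝ} (h : t ≤ 0) : c01 t = 0 := by
  have : min 1 t ≤ 0 := le_trans (min_le_right _ _) h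
  simp [c01, max_eq_left this]

lemma c01_pos {t : ℝ} (h : 0 < c01 t) : 0 < t := by
  by_contra hc
  rw [c01_eq_zero (not_lt.mp hc)] at h; exact lt_irrefl _ h

lemma continuous_c01 : Continuous c01 :=
  continuous_const.max (continuous_const.min continuous_id)

/-- the radial/level bump `w` : positive on `(1/2,4)`, equal `1` on `[3/4,3]`. -/
def wfun (s : ℝ) : ℝ := c01 (min (4*s - 2) (4 - s))

lemma wfun_pos {s : ℝ} (h : 0 < wfun s) : 1/2 < s ∧ s < 4 := by
  have := c01_pos h
  have h1 : 0 < 4*s - 2 := lt_of_lt_of_le this (min_le_left _ _)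
  have h2 : 0 < 4 - s := lt_of_lt_of_le this (min_le_right _ _)
  constructor <;> linarith

lemma wfun_eq_one {s : ℝ} (h1 : 3/4 ≤ s) (h2 : s ≤ 3) : wfun s = 1 := by
  apply c01_eq_one
  apply le_min <;> linarith

lemma continuous_wfun : Continuous wfun := by
  unfold wfun
  exact continuous_c01.comp (((continuous_const.mul continuous_id).sub continuous_const).min
    (continuous_const.sub continuous_id))

/-- the distance bump at scale `√n`: positive for `s < 2√n`, equal `1` for `s ≤ √n`. -/
def ufun (n : ℕ) (s : ℝ) : ℝ := c01 (2 - s / Real.sqrt n)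

lemma sqrt_pos_of_one_le {n : ℕ} (hn : 1 ≤ n) : 0 < Real.sqrt n := by
  apply Real.sqrt_pos.mpr; exact_mod_cast Nat.lt_of_lt_of_le Nat.zero_lt_one hn

lemma sqrt_le_nat (n : ℕ) : Real.sqrt n ≤ n := by
  have h : Real.sqrt n ≤ Real.sqrt ((n:ℝ)^2) := by
    apply Real.sqrt_le_sqrt
    have := Nat.le_self_pow (two_ne_zero) n
    exact_mod_cast this
  rwa [Real.sqrt_sq (by positivity)] at h

lemma ufun_pos {n : ℕ} (hn : 1 ≤ n) {s : ℝ} (h : 0 < ufun n s) : s < 2 * Real.sqrt n := by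
  have h2 := c01_pos h
  have hs := sqrt_pos_of_one_le hn
  have : s / Real.sqrt n < 2 := by linarith
  calc s = (s / Real.sqrt n) * Real.sqrt n := by field_simp
  _ < 2 * Real.sqrt n := by apply mul_lt_mul_of_pos_right this hs

lemma ufun_eq_one {n : ℕ} (hn : 1 ≤ n) {s : ℝ} (h : s ≤ Real.sqrt n) : ufun n s = 1 := by
  apply c01_eq_one
  have hs := sqrt_pos_of_one_le hn
  have : s / Real.sqrt n ≤ 1 := by
    rw [div_le_one hs]; exact h
  linarith

lemma continuous_ufun (n : ℕ) : Continuous (ufun n) := by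
  unfold ufun
  exact continuous_c01.comp (continuous_const.sub (continuous_id.div_const _))

/-! ### Euclidean helpers -/

lemma coord_dist_le {n : ℕ} (x y : EuclideanSpace ℝ (Fin n)) (j : Fin n) :
    dist (x j) (y j) ≤ dist x y := by
  rw [EuclideanSpace.dist_eq]
  have h1 : dist (x j) (y j) ^ 2 ≤ ∑ i, dist (x i) (y i) ^ 2 :=
    Finset.single_le_sum (f := fun i => dist (x i) (y i) ^ 2)
      (fun i _ => by positivity) (Finset.mem_univ j)
  calc dist (x j) (y j) = Real.sqrt (dist (x j) (y j) ^ 2) := by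
        rw [Real.sqrt_sq dist_nonneg]
  _ ≤ _ := Real.sqrt_le_sqrt h1

lemma dist_le_sqrt_mul {n : ℕ} (x y : EuclideanSpace ℝ (Fin n)) {t : ℝ} (ht : 0 ≤ t)
    (h : ∀ j, dist (x j) (y j) ≤ t) : dist x y ≤ Real.sqrt n * t := by
  rw [EuclideanSpace.dist_eq]
  have h1 : ∑ i, dist (x i) (y i) ^ 2 ≤ (n : ℝ) * t ^ 2 := by
    calc ∑ i, dist (x i) (y i) ^ 2 ≤ ∑ _i : Fin n, t ^ 2 := by
          apply Finset.sum_le_sum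
          intro i _
          exact pow_le_pow_left₀ dist_nonneg (h i) 2
    _ = (n : ℝ) * t ^ 2 := by simp [Finset.sum_const, nsmul_eq_mul]
  calc Real.sqrt (∑ i, dist (x i) (y i) ^ 2) ≤ Real.sqrt ((n:ℝ) * t ^ 2) :=
        Real.sqrt_le_sqrt h1
  _ = Real.sqrt n * t := by
        rw [Real.sqrt_mul (Nat.cast_nonneg n), Real.sqrt_sq ht]

/-! ### Index set, centers, colors -/

/-- index set : a dyadic level and a lattice point -/
abbrev Idx (n : ℕ) := ℤ × (Fin n → ℤ)

/-- the center of the lattice ball indexed by `i` -/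
def ctr {n : ℕ} (i : Idx n) : EuclideanSpace ℝ (Fin n) :=
  (WithLp.equiv 2 (Fin n → ℝ)).symm (fun j => (2:ℝ)^(-i.1) * (i.2 j))

lemma ctr_apply {n : ℕ} (i : Idx n) (j : Fin n) : ctr i j = (2:ℝ)^(-i.1) * (i.2 j) := rfl

instance (n : ℕ) : NeZero (4*n+1) := ⟨by omega⟩

/-- colors: same-colored indices which are both active somewhere must coincide -/
abbrev Colors (n : ℕ) := ZMod 3 × (Fin n → ZMod (4*n+1))

/-- the color of an index -/
def colr {n : ℕ} (i : Idx n) : Colors n := ((i.1 : ZMod 3), fun j => ((i.2 j : ZMod (4*n+1))))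

/-- total number of colors -/
def M (n : ℕ) : ℕ := Fintype.card (Colors n)

/-- enumeration of the colors -/
def eqv (n : ℕ) : Colors n ≃ Fin (M n) := Fintype.equivFin _

/-- rank of an index: position of its color in the enumeration -/
def rnk {n : ℕ} (i : Idx n) : ℕ := (eqv n (colr i) : ℕ)

lemma rnk_lt {n : ℕ} (i : Idx n) : rnk i < M n := (eqv n (colr i)).isLt

lemma colr_eq_of_rnk_eq {n : ℕ} {i i' : Idx n} (h : rnk i = rnk i') : colr i = colr i' := by
  have := Fin.ext (a := eqv n (colr i)) (b := eqv n (colr i')) h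
  exact (eqv n).injective this

/-! ### The context -/

/-- All the data of the extension problem. -/
structure Ctx (n : ℕ) (X : Type u) [MetricSpace X] where
  L : ℝ
  lam : ℝ
  R : ℝ
  B : Set X
  K : Set (EuclideanSpace ℝ (Fin n))
  φ : EuclideanSpace ℝ (Fin n) → X
  hL : 1 ≤ L
  hlam : 1 ≤ lam
  hR : 0 < R
  hLLC : IsLLCSubset lam R B
  hne : K.Nonempty
  hK : IsCompact K
  hbi : ∀ a ∈ K, ∀ b ∈ K, dist (φ a) (φ b) ≤ L * ‖a - b‖
  hmem : ∀ a ∈ K, φ a ∈ B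
  hn : 1 ≤ n

namespace Ctx

variable {n : ℕ} {X : Type u} [MetricSpace X] (c : Ctx n X)

/-- distance to `K` -/
def dK (y : EuclideanSpace ℝ (Fin n)) : ℝ := Metric.infDist y c.K

lemma dK_nonneg (y : EuclideanSpace ℝ (Fin n)) : 0 ≤ c.dK y := Metric.infDist_nonneg

lemma dK_continuous : Continuous c.dK := continuous_infDist_pt c.K

lemma dK_le_dist {y x : EuclideanSpace ℝ (Fin n)} (hx : x ∈ c.K) : c.dK y ≤ dist y x :=
  Metric.infDist_le_dist_of_mem hx

lemma dK_pos {y : EuclideanSpace ℝ (Fin n)} (hy : y ∉ c.K) : 0 < c.dK y := by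
  rcases (Metric.infDist_nonneg (s := c.K) (x := y)).lt_or_eq with h | h
  · exact h
  · exfalso
    apply hy
    rw [← c.hK.isClosed.closure_eq]
    exact (Metric.mem_closure_iff_infDist_zero c.hne).mpr h.symm

lemma dK_eq_zero {y : EuclideanSpace ℝ (Fin n)} (hy : y ∈ c.K) : c.dK y = 0 :=
  Metric.infDist_zero_of_mem hy

/-- the bump function of the index `i` -/
def theta (i : Idx n) (y : EuclideanSpace ℝ (Fin n)) : ℝ :=
  min (wfun ((2:ℝ)^i.1 * c.dK y)) (ufun n ((2:ℝ)^i.1 * dist y (ctr i)))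

lemma theta_nonneg (i : Idx n) (y : EuclideanSpace ℝ (Fin n)) : 0 ≤ c.theta i y :=
  le_min (c01_nonneg _) (c01_nonneg _)

lemma theta_le_one (i : Idx n) (y : EuclideanSpace ℝ (Fin n)) : c.theta i y ≤ 1 :=
  le_trans (min_le_left _ _) (c01_le_one _)

lemma theta_continuous (i : Idx n) : Continuous (fun y => c.theta i y) := by
  apply Continuous.min
  · exact continuous_wfun.comp (continuous_const.mul c.dK_continuous)
  · exact (continuous_ufun n).comp (continuous_const.mul (continuous_id.dist continuous_const))

lemma theta_pos_facts {i : Idx n} {y : EuclideanSpace ℝ (Fin n)} (h : 0 < c.theta i y) :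
    1/2 < (2:ℝ)^i.1 * c.dK y ∧ (2:ℝ)^i.1 * c.dK y < 4 ∧
      (2:ℝ)^i.1 * dist y (ctr i) < 2 * Real.sqrt n := by
  have h1 : 0 < wfun ((2:ℝ)^i.1 * c.dK y) := lt_of_lt_of_le h (min_le_left _ _)
  have h2 : 0 < ufun n ((2:ℝ)^i.1 * dist y (ctr i)) := lt_of_lt_of_le h (min_le_right _ _)
  obtain ⟨hw1, hw2⟩ := wfun_pos h1
  exact ⟨hw1, hw2, ufun_pos c.hn h2⟩

lemma zpow_pos' (k : ℤ) : (0:ℝ) < 2^k := zpow_pos two_pos k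

/-- basic geometric consequences of activity -/
lemma active_scale {i : Idx n} {y : EuclideanSpace ℝ (Fin n)} (h : 0 < c.theta i y) :
    (2:ℝ)^(-i.1) < 2 * c.dK y ∧ c.dK y < 4 * (2:ℝ)^(-i.1) ∧
      dist y (ctr i) < 2 * Real.sqrt n * (2:ℝ)^(-i.1) := by
  obtain ⟨h1, h2, h3⟩ := c.theta_pos_facts h
  have hp : (0:ℝ) < 2^i.1 := zpow_pos' i.1
  have hip : (2:ℝ)^(-i.1) = (2^i.1)⁻¹ := by
    rw [zpow_neg]
  refine ⟨?_, ?_, ?_⟩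
  · rw [hip, inv_lt_iff_one_lt_mul₀ hp]
    nlinarith
  · rw [hip, ← div_eq_mul_inv, lt_div_iff₀ hp]
    nlinarith
  · rw [hip, ← div_eq_mul_inv, lt_div_iff₀ hp]
    nlinarith [Real.sqrt_nonneg (n:ℝ)]

/-- closest point of `K` to the center of an index -/
def anc (i : Idx n) : EuclideanSpace ℝ (Fin n) :=
  (c.hK.exists_infDist_eq_dist c.hne (ctr i)).choose

lemma anc_mem (i : Idx n) : c.anc i ∈ c.K :=
  (c.hK.exists_infDist_eq_dist c.hne (ctr i)).choose_spec.1

lemma anc_dist (i : Idx n) : dist (ctr i) (c.anc i) = Metric.infDist (ctr i) c.K :=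
  ((c.hK.exists_infDist_eq_dist c.hne (ctr i)).choose_spec.2).symm

/-- distance from an active point to the anchor of the index, quantitatively -/
lemma active_anc_dist {i : Idx n} {y : EuclideanSpace ℝ (Fin n)} (h : 0 < c.theta i y) :
    dist y (c.anc i) ≤ (4*(n:ℝ)+4) * (2:ℝ)^(-i.1) := by
  obtain ⟨h1, h2, h3⟩ := c.active_scale h
  have hd : dist (ctr i) (c.anc i) ≤ c.dK y + dist y (ctr i) := by
    rw [c.anc_dist i]
    calc Metric.infDist (ctr i) c.K ≤ Metric.infDist y c.K + dist (ctr i) y :=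
      Metric.infDist_le_infDist_add_dist
    _ = c.dK y + dist y (ctr i) := by rw [dist_comm]; rfl
  have hs : Real.sqrt n ≤ n := sqrt_le_nat n
  have hp : (0:ℝ) < 2^(-i.1) := zpow_pos' _
  calc dist y (c.anc i) ≤ dist y (ctr i) + dist (ctr i) (c.anc i) := dist_triangle _ _ _
  _ ≤ dist y (ctr i) + (c.dK y + dist y (ctr i)) := by linarith
  _ ≤ (4*(n:ℝ)+4) * (2:ℝ)^(-i.1) := by nlinarith [Nat.cast_nonneg (α := ℝ) n]

/-- the big scale factor `Λ = 32 λ` -/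
def Lam : ℝ := 32 * c.lam

lemma Lam_ge : (32:ℝ) ≤ c.Lam := by
  have := c.hlam; unfold Lam; linarith

lemma Lam_pos : (0:ℝ) < c.Lam := by linarith [c.Lam_ge]

lemma Lam_one_le : (1:ℝ) ≤ c.Lam := by linarith [c.Lam_ge]

/-- the base radius factor `β = 32 L (4n+4)` -/
def beta : ℝ := 32 * c.L * (4*(n:ℝ)+4)

lemma beta_pos : 0 < c.beta := by
  have := c.hL; have : (0:ℝ) ≤ (n:ℝ) := Nat.cast_nonneg n
  unfold beta; nlinarith [c.hL]

/-- the radius of the target ball of an index -/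
def rad (i : Idx n) : ℝ := c.Lam^(rnk i) * c.beta * (2:ℝ)^(-i.1)

lemma rad_pos (i : Idx n) : 0 < c.rad i := by
  unfold rad
  have h1 := c.Lam_pos; have h2 := c.beta_pos; have h3 : (0:ℝ) < 2^(-i.1) := zpow_pos two_pos _
  positivity

/-- the width of the neighborhood `U` -/
def delta : ℝ := c.R / (4 * c.Lam^(M n) * c.beta)

lemma delta_pos : 0 < c.delta := by
  unfold delta
  have := c.Lam_pos; have := c.beta_pos; have := c.hR
  positivity

/-- active indices at points of `U` have radius less than `R` -/
lemma rad_lt_R {i : Idx n} {y : EuclideanSpace ℝ (Fin n)} (h : 0 < c.theta i y)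
    (hy : c.dK y < c.delta) : c.rad i < c.R := by
  obtain ⟨h1, _, _⟩ := c.active_scale h
  have hLpos := c.Lam_pos
  have hbpos := c.beta_pos
  have hL1 := c.Lam_one_le
  have hMle : c.Lam^(rnk i) ≤ c.Lam^(M n) := by
    apply pow_le_pow_right₀ hL1 (le_of_lt (rnk_lt i))
  have hMpos : (0:ℝ) < c.Lam^(M n) := pow_pos hLpos _
  have h0 : (0:ℝ) ≤ c.Lam ^ rnk i * c.beta := by positivity
  have hdpos : 0 ≤ c.dK y := c.dK_nonneg y
  calc c.rad i = c.Lam^(rnk i) * c.beta * (2:ℝ)^(-i.1) := rfl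
  _ ≤ c.Lam^(rnk i) * c.beta * (2 * c.dK y) := by
      apply mul_le_mul_of_nonneg_left (le_of_lt h1) h0
  _ ≤ c.Lam^(M n) * c.beta * (2 * c.dK y) := by
      apply mul_le_mul_of_nonneg_right (mul_le_mul_of_nonneg_right hMle (le_of_lt hbpos))
      linarith
  _ < c.Lam^(M n) * c.beta * (2 * c.delta) := by
      apply mul_lt_mul_of_pos_left ?_ (by positivity)
      linarith
  _ = c.R / 2 := by
      unfold delta; field_simp; ring
  _ < c.R := by linarith [c.hR]

/-- the contraction homotopy associated to an index (junk if the radius is too big) -/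
def Hmap (i : Idx n) : ℝ × X → X :=
  if h : c.rad i < c.R then
    (c.hLLC (c.φ (c.anc i)) (c.hmem _ (c.anc_mem i)) (c.rad i) (c.rad_pos i) h).choose_spec.choose
  else fun pz => pz.2

lemma Hmap_spec {i : Idx n} (h : c.rad i < c.R) :
    ContinuousOn (c.Hmap i) (Set.Icc (0:ℝ) 1 ×ˢ Metric.ball (c.φ (c.anc i)) (c.rad i)) ∧
    (∀ z ∈ Metric.ball (c.φ (c.anc i)) (c.rad i), c.Hmap i (0, z) = z) ∧
    (∀ z ∈ Metric.ball (c.φ (c.anc i)) (c.rad i), c.Hmap i (1, z) =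
      (c.hLLC (c.φ (c.anc i)) (c.hmem _ (c.anc_mem i)) (c.rad i) (c.rad_pos i) h).choose) ∧
    (∀ t ∈ Set.Icc (0:ℝ) 1, ∀ z ∈ Metric.ball (c.φ (c.anc i)) (c.rad i),
      c.Hmap i (t, z) ∈ Metric.ball (c.φ (c.anc i)) (c.lam * c.rad i)) := by
  have hs := (c.hLLC (c.φ (c.anc i)) (c.hmem _ (c.anc_mem i)) (c.rad i) (c.rad_pos i) h).choose_spec.choose_spec
  rw [Hmap, dif_pos h]
  exact hs

/-- the basic move towards the value at the anchor of `i`: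
identity for `t ≤ 1/3`, contraction then path to `φ (anc i)` above. -/
def Ghat (i : Idx n) (t : ℝ) (z : X) : X :=
  if t ≤ 1/3 then z
  else if t ≤ 2/3 then c.Hmap i (c01 (3*t - 1), z)
  else c.Hmap i (c01 (3 - 3*t), c.φ (c.anc i))

lemma Ghat_of_le {i : Idx n} {t : ℝ} (h : t ≤ 1/3) (z : X) : c.Ghat i t z = z := if_pos h

lemma Ghat_one {i : Idx n} (h : c.rad i < c.R) (z : X) : c.Ghat i 1 z = c.φ (c.anc i) := by
  rw [Ghat, if_neg (by norm_num), if_neg (by norm_num)]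
  have h0 : c01 (3 - 3*(1:ℝ)) = 0 := by rw [show (3:ℝ) - 3*1 = 0 by ring]; exact c01_eq_zero le_rfl
  rw [h0]
  exact (c.Hmap_spec h).2.1 _ (Metric.mem_ball_self (c.rad_pos i))

lemma Ghat_mem {i : Idx n} (h : c.rad i < c.R) {t : ℝ} (ht : 1/3 < t) (ht1 : t ≤ 1) {z : X}
    (hz : z ∈ Metric.ball (c.φ (c.anc i)) (c.rad i)) :
    c.Ghat i t z ∈ Metric.ball (c.φ (c.anc i)) (c.lam * c.rad i) := by
  rw [Ghat, if_neg (not_le.mpr ht)]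
  by_cases h2 : t ≤ 2/3
  · rw [if_pos h2]
    exact (c.Hmap_spec h).2.2.2 _ (c01_mem _) _ hz
  · rw [if_neg h2]
    exact (c.Hmap_spec h).2.2.2 _ (c01_mem _) _ (Metric.mem_ball_self (c.rad_pos i))

/-- joint continuity of `Ghat` on `[0,1] × ball` -/
lemma Ghat_cont {i : Idx n} (h : c.rad i < c.R) :
    ContinuousOn (fun p : ℝ × X => c.Ghat i p.1 p.2)
      (Set.Icc (0:ℝ) 1 ×ˢ Metric.ball (c.φ (c.anc i)) (c.rad i)) := by
  obtain ⟨Hc, H0, H1, Hm⟩ := c.Hmap_spec h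
  set s : Set (ℝ × X) := Set.Icc (0:ℝ) 1 ×ˢ Metric.ball (c.φ (c.anc i)) (c.rad i) with hs
  -- the two inner pieces
  have cont2 : ContinuousOn (fun p : ℝ × X => c.Hmap i (c01 (3*p.1 - 1), p.2)) s := by
    apply Hc.comp
    · exact (continuous_c01.comp ((continuous_const.mul continuous_fst).sub
        continuous_const)).prodMk continuous_snd |>.continuousOn
    · intro p hp
      exact ⟨c01_mem _, hp.2⟩
  have cont3 : ContinuousOn (fun p : ℝ × X => c.Hmap i (c01 (3 - 3*p.1), c.φ (c.anc i))) s := by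
    apply Hc.comp
    · exact (continuous_c01.comp (continuous_const.sub
        (continuous_const.mul continuous_fst))).prodMk continuous_const |>.continuousOn
    · intro p _
      exact ⟨c01_mem _, Metric.mem_ball_self (c.rad_pos i)⟩
  -- glue the second and third piece
  have cont23 : ContinuousOn (fun p : ℝ × X =>
      if p.1 ≤ 2/3 then c.Hmap i (c01 (3*p.1 - 1), p.2)
      else c.Hmap i (c01 (3 - 3*p.1), c.φ (c.anc i))) s := by
    apply ContinuousOn.if
    · rintro p ⟨hps, hpf⟩
      have : p.1 = 2/3 := by
        have := frontier_le_subset_eq (continuous_fst) (continuous_const) hpf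
        exact this
      have e1 : c01 (3*p.1 - 1) = 1 := by rw [this]; apply c01_eq_one; norm_num
      have e2 : c01 (3 - 3*p.1) = 1 := by rw [this]; apply c01_eq_one; norm_num
      rw [e1, e2, H1 _ hps.2, H1 _ (Metric.mem_ball_self (c.rad_pos i))]
    · exact cont2.mono (Set.inter_subset_left)
    · exact cont3.mono (Set.inter_subset_left)
  -- glue with the identity piece
  apply ContinuousOn.if
  · rintro p ⟨hps, hpf⟩
    have hp13 : p.1 = 1/3 := frontier_le_subset_eq (continuous_fst) (continuous_const) hpf
    have e1 : c01 (3*p.1 - 1) = 0 := by rw [hp13]; apply c01_eq_zero; norm_num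
    rw [if_pos (by rw [hp13]; norm_num : p.1 ≤ 2/3), e1, H0 _ hps.2]
  · exact continuousOn_snd.mono (Set.inter_subset_left)
  · exact cont23.mono (Set.inter_subset_left)

open Classical in
/-- the stage map of a color -/
def Fc (col : Colors n) (y : EuclideanSpace ℝ (Fin n)) (z : X) : X :=
  if h : ∃ i : Idx n, colr i = col ∧ 0 < c.theta i y then
    c.Ghat h.choose (c.theta h.choose y) z
  else z

/-- two indices of the same color active at the same point coincide -/
lemma active_unique {i i' : Idx n} {y : EuclideanSpace ℝ (Fin n)}
    (h : 0 < c.theta i y) (h' : 0 < c.theta i' y) (hc : colr i = colr i') : i = i' := by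
  obtain ⟨h1, h2, h3⟩ := c.theta_pos_facts h
  obtain ⟨h1', h2', h3'⟩ := c.theta_pos_facts h'
  have hdpos : 0 < c.dK y := by
    by_contra hd
    push_neg at hd
    have : (2:ℝ)^i.1 * c.dK y ≤ 0 := by
      have := zpow_pos (n := i.1) (two_pos (α := ℝ))
      nlinarith
    linarith
  have hc1 : (i.1 : ZMod 3) = (i'.1 : ZMod 3) := congrArg Prod.fst hc
  have hc2 : ∀ j, (i.2 j : ZMod (4*n+1)) = (i'.2 j : ZMod (4*n+1)) := by
    intro j
    exact congrFun (congrArg Prod.snd hc) j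
  -- the levels agree
  have hklt : ∀ k k' : ℤ, (2:ℝ)^k * c.dK y < 4 → 1/2 < (2:ℝ)^k' * c.dK y → k < k' + 3 := by
    intro k k' ha hb
    have h8 : (2:ℝ)^k < 2^(k'+3) := by
      have e : (2:ℝ)^(k'+3) = 2^k' * 8 := by
        rw [zpow_add₀ (two_ne_zero)]; norm_num
      rw [e]
      have hki : (2:ℝ)^k * c.dK y < 4 := ha
      have hpk : (0:ℝ) < 2^k := zpow_pos two_pos _
      have hpk' : (0:ℝ) < 2^k' := zpow_pos two_pos _
      nlinarith
    exact_mod_cast (zpow_lt_zpow_iff_right₀ (one_lt_two) ).mp h8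
  have hk1 : i.1 < i'.1 + 3 := hklt _ _ h2 h1'
  have hk2 : i'.1 < i.1 + 3 := hklt _ _ h2' h1
  have hdvd : (3:ℤ) ∣ (i.1 - i'.1) := by
    have := (ZMod.intCast_zmod_eq_zero_iff_dvd (i.1 - i'.1) 3).mp
      (by push_cast; rw [hc1]; ring)
    exact_mod_cast this
  have hkeq : i.1 = i'.1 := by
    have := Int.eq_zero_of_abs_lt_dvd hdvd (by rw [abs_lt]; omega)
    omega
  -- the lattice points agree
  have hveq : i.2 = i'.2 := by
    funext j
    have hd1 : dist (y j) (ctr i j) ≤ dist y (ctr i) := coord_dist_le _ _ j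
    have hd2 : dist (y j) (ctr i' j) ≤ dist y (ctr i') := coord_dist_le _ _ j
    have hp : (0:ℝ) < 2^i.1 := zpow_pos two_pos _
    have hsn : Real.sqrt n ≤ n := sqrt_le_nat n
    have hcc : dist (ctr i j) (ctr i' j) < 4 * Real.sqrt n * (2:ℝ)^(-i.1) := by
      have hdy1 : dist y (ctr i) < 2 * Real.sqrt n * (2:ℝ)^(-i.1) := (c.active_scale h).2.2
      have hdy2 : dist y (ctr i') < 2 * Real.sqrt n * (2:ℝ)^(-i.1) := by
        have := (c.active_scale h').2.2
        rwa [← hkeq] at this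
      calc dist (ctr i j) (ctr i' j) ≤ dist (ctr i j) (y j) + dist (y j) (ctr i' j) :=
            dist_triangle _ _ _
      _ ≤ dist y (ctr i) + dist y (ctr i') := by
            rw [dist_comm (ctr i j) (y j)]; exact add_le_add hd1 hd2
      _ < 4 * Real.sqrt n * (2:ℝ)^(-i.1) := by linarith
    have hvr : |(i.2 j : ℝ) - (i'.2 j : ℝ)| < 4 * (n:ℝ) + 1 := by
      have e : dist (ctr i j) (ctr i' j) = (2:ℝ)^(-i.1) * |(i.2 j : ℝ) - (i'.2 j : ℝ)| := by
        rw [ctr_apply, ctr_apply, ← hkeq, Real.dist_eq, ← mul_sub, abs_mul,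
          abs_of_pos (zpow_pos two_pos _)]
      have hep : (0:ℝ) < (2:ℝ)^(-i.1) := zpow_pos two_pos _
      rw [e] at hcc
      have h4 : |(i.2 j : ℝ) - (i'.2 j : ℝ)| < 4 * Real.sqrt n := by
        nlinarith [abs_nonneg ((i.2 j : ℝ) - (i'.2 j : ℝ))]
      nlinarith
    have hdvd' : ((4*n+1 : ℕ) : ℤ) ∣ (i.2 j - i'.2 j) := by
      have := (ZMod.intCast_zmod_eq_zero_iff_dvd (i.2 j - i'.2 j) (4*n+1)).mp
        (by push_cast; rw [hc2 j]; ring)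
      exact_mod_cast this
    have habs : |i.2 j - i'.2 j| < ((4*n+1 : ℕ) : ℤ) := by
      have h6 : ((|i.2 j - i'.2 j| : ℤ) : ℝ) < ((4*n+1 : ℕ) : ℝ) := by
        push_cast
        linarith [hvr]
      exact_mod_cast h6
    have := Int.eq_zero_of_abs_lt_dvd hdvd' habs
    omega
  exact Prod.ext hkeq hveq

lemma rnk_eq_iff {i j : Idx n} : rnk i = rnk j ↔ colr i = colr j := by
  constructor
  · exact colr_eq_of_rnk_eq
  · intro h; unfold rnk; rw [h]

open Classical in
lemma Fc_of_active {col : Colors n} {j : Idx n} {y : EuclideanSpace ℝ (Fin n)}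
    (hcol : colr j = col) (hj : 0 < c.theta j y) (z : X) :
    c.Fc col y z = c.Ghat j (c.theta j y) z := by
  have hex : ∃ i : Idx n, colr i = col ∧ 0 < c.theta i y := ⟨j, hcol, hj⟩
  rw [Fc, dif_pos hex]
  have := hex.choose_spec
  have heq : hex.choose = j := c.active_unique this.2 hj (this.1.trans hcol.symm)
  rw [heq]

open Classical in
lemma Fc_eq_id {col : Colors n} {y : EuclideanSpace ℝ (Fin n)}
    (hall : ∀ i : Idx n, colr i = col → c.theta i y ≤ 1/3) (z : X) : c.Fc col y z = z := by
  rw [Fc]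
  split_ifs with hex
  · exact c.Ghat_of_le (hall _ hex.choose_spec.1) z
  · rfl

lemma Fc_congr {col : Colors n} {j : Idx n} {y : EuclideanSpace ℝ (Fin n)}
    (hcol : colr j = col)
    (hoth : ∀ i : Idx n, colr i = col → i ≠ j → c.theta i y ≤ 1/3) (z : X) :
    c.Fc col y z = c.Ghat j (c.theta j y) z := by
  by_cases hj : 0 < c.theta j y
  · exact c.Fc_of_active hcol hj z
  · push_neg at hj
    have hj0 : c.theta j y = 0 := le_antisymm hj (c.theta_nonneg j y)
    rw [hj0, c.Ghat_of_le (by norm_num) z]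
    apply c.Fc_eq_id
    intro i hi
    by_cases hij : i = j
    · rw [hij, hj0]; norm_num
    · exact hoth i hi hij

/-- the iterated stage maps -/
def zf : ℕ → EuclideanSpace ℝ (Fin n) → X
  | 0, _ => c.φ c.hne.choose
  | (m+1), y => if hm : m < M n then c.Fc ((eqv n).symm ⟨m, hm⟩) y (zf m y) else zf m y

lemma zf_succ {m : ℕ} (hm : m < M n) (y : EuclideanSpace ℝ (Fin n)) :
    c.zf (m+1) y = c.Fc ((eqv n).symm ⟨m, hm⟩) y (c.zf m y) := by
  rw [zf, dif_pos hm]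

lemma rnk_colr_symm {m : ℕ} (hm : m < M n) {i : Idx n} (h : colr i = (eqv n).symm ⟨m, hm⟩) :
    rnk i = m := by
  unfold rnk
  rw [h]
  simp

/-- existence of a reset index: a neighborhood on which some `theta i` is identically 1 -/
lemma exists_reset {y : EuclideanSpace ℝ (Fin n)} (hy : 0 < c.dK y) :
    ∃ i : Idx n, ∃ V : Set (EuclideanSpace ℝ (Fin n)),
      IsOpen V ∧ y ∈ V ∧ ∀ y' ∈ V, c.theta i y' = 1 := by
  obtain ⟨m, hm1, hm2⟩ : ∃ m : ℤ, (2:ℝ)^m ≤ c.dK y ∧ c.dK y < 2^(m+1) := by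
    obtain ⟨m, hm⟩ := exists_mem_Ico_zpow hy one_lt_two
    exact ⟨m, hm.1, hm.2⟩
  set k : ℤ := -m with hk
  have hek : (2:ℝ)^(-k) = 2^m := by rw [hk, neg_neg]
  have hpk : (0:ℝ) < 2^k := zpow_pos two_pos _
  have hpm : (0:ℝ) < 2^m := zpow_pos two_pos _
  have hkm : (2:ℝ)^k * 2^m = 1 := by
    rw [hk, ← zpow_add₀ (two_ne_zero)]; norm_num
  set v : Fin n → ℤ := fun j => round ((2:ℝ)^k * y j) with hv
  set i : Idx n := (k, v) with hi
  have hctr : dist y (ctr i) ≤ Real.sqrt n * ((2:ℝ)^m / 2) := by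
    apply dist_le_sqrt_mul _ _ (by positivity)
    intro j
    have : dist (y j) (ctr i j) = |(2:ℝ)^k * y j - round ((2:ℝ)^k * y j)| * 2^m := by
      rw [ctr_apply, Real.dist_eq]
      have : y j - (2:ℝ)^(-i.1) * (i.2 j) = ((2:ℝ)^k * y j - round ((2:ℝ)^k * y j)) * 2^m := by
        have : (2:ℝ)^(-i.1) = 2^m := by rw [hi, hek]
        rw [this]
        have expand : ((2:ℝ)^k * y j - round ((2:ℝ)^k * y j)) * 2^m
            = (2^k * 2^m) * y j - 2^m * round ((2:ℝ)^k * y j) := by ring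
        rw [expand, hkm, one_mul]
      rw [this, abs_mul, abs_of_pos hpm]
    rw [this]
    have hround := abs_sub_round ((2:ℝ)^k * y j)
    calc |(2:ℝ)^k * y j - round ((2:ℝ)^k * y j)| * 2^m ≤ (1/2) * 2^m := by
          apply mul_le_mul_of_nonneg_right hround (le_of_lt hpm)
    _ = 2^m / 2 := by ring
  refine ⟨i, (c.dK ⁻¹' Set.Ioi ((3/4) * 2^m)) ∩ (c.dK ⁻¹' Set.Iio (3 * 2^m)) ∩
    ((fun y' => dist y' (ctr i)) ⁻¹' Set.Iio (Real.sqrt n * 2^m)), ?_, ?_, ?_⟩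
  · apply IsOpen.inter
    apply IsOpen.inter
    · exact (isOpen_Ioi).preimage c.dK_continuous
    · exact (isOpen_Iio).preimage c.dK_continuous
    · exact (isOpen_Iio).preimage (continuous_id.dist continuous_const)
  · have hsn : 0 < Real.sqrt n := sqrt_pos_of_one_le c.hn
    refine ⟨⟨?_, ?_⟩, ?_⟩
    · simp only [Set.mem_preimage, Set.mem_Ioi]; linarith
    · simp only [Set.mem_preimage, Set.mem_Iio]
      have : (2:ℝ)^(m+1) = 2 * 2^m := by rw [zpow_add₀ (two_ne_zero)]; ring
      rw [this] at hm2; linarith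
    · simp only [Set.mem_preimage, Set.mem_Iio]
      calc dist y (ctr i) ≤ Real.sqrt n * (2^m / 2) := hctr
      _ < Real.sqrt n * 2^m := by nlinarith
  · rintro y' ⟨⟨h1, h2⟩, h3⟩
    simp only [Set.mem_preimage, Set.mem_Ioi, Set.mem_Iio] at h1 h2 h3
    unfold theta
    have hw : wfun ((2:ℝ)^i.1 * c.dK y') = 1 := by
      apply wfun_eq_one
      · have : (2:ℝ)^i.1 * ((3/4) * 2^m) ≤ 2^i.1 * c.dK y' := by
          apply mul_le_mul_of_nonneg_left (le_of_lt h1) (le_of_lt hpk)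
        calc (3/4 : ℝ) = 2^k * ((3/4) * 2^m) := by
              rw [show (2:ℝ)^k * ((3/4) * 2^m) = (3/4) * (2^k * 2^m) by ring, hkm]; ring
        _ ≤ 2^i.1 * c.dK y' := this
      · calc (2:ℝ)^i.1 * c.dK y' ≤ 2^k * (3 * 2^m) := by
              apply mul_le_mul_of_nonneg_left (le_of_lt h2) (le_of_lt hpk)
        _ = 3 := by rw [show (2:ℝ)^k * (3 * 2^m) = 3 * (2^k * 2^m) by ring, hkm]; ring
    have hu : ufun n ((2:ℝ)^i.1 * dist y' (ctr i)) = 1 := by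
      apply ufun_eq_one c.hn
      calc (2:ℝ)^i.1 * dist y' (ctr i) ≤ 2^k * (Real.sqrt n * 2^m) := by
            apply mul_le_mul_of_nonneg_left (le_of_lt h3) (le_of_lt hpk)
      _ = Real.sqrt n := by
            rw [show (2:ℝ)^k * (Real.sqrt n * 2^m) = Real.sqrt n * (2^k * 2^m) by ring, hkm]; ring
    rw [hw, hu]
    norm_num

/-- near any point off `K`, only finitely many indices are ever active -/
lemma finite_active {y₀ : EuclideanSpace ℝ (Fin n)} (hy₀ : 0 < c.dK y₀) :
    ∃ S : Finset (Idx n), ∀ y ∈ Metric.ball y₀ (c.dK y₀ / 4), ∀ i : Idx n,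
      0 < c.theta i y → i ∈ S := by
  set d0 := c.dK y₀ with hd0
  obtain ⟨m0, hm1, hm2⟩ : ∃ m : ℤ, (2:ℝ)^m ≤ d0 ∧ d0 < 2^(m+1) := by
    obtain ⟨m, hm⟩ := exists_mem_Ico_zpow hy₀ one_lt_two
    exact ⟨m, hm.1, hm.2⟩
  set b : Fin n → ℤ := fun j => ⌈(2:ℝ)^(-m0+3) * |y₀ j| + 2*(n:ℝ) + 2⌉ with hb
  refine ⟨Finset.Icc (-m0-3) (-m0+3) ×ˢ Finset.Icc (fun j => -(b j)) b, ?_⟩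
  intro y hyb i hact
  have hyd : dist y y₀ < d0 / 4 := Metric.mem_ball.mp hyb
  have hdy1 : c.dK y ≤ d0 + dist y y₀ := by
    calc c.dK y ≤ c.dK y₀ + dist y y₀ := Metric.infDist_le_infDist_add_dist
    _ = d0 + dist y y₀ := rfl
  have hdy2 : d0 ≤ c.dK y + dist y y₀ := by
    calc d0 = c.dK y₀ := rfl
    _ ≤ c.dK y + dist y₀ y := Metric.infDist_le_infDist_add_dist
    _ = c.dK y + dist y y₀ := by rw [dist_comm]
  have hdlo : 3/4 * d0 < c.dK y := by linarith
  have hdhi : c.dK y < 5/4 * d0 := by linarith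
  obtain ⟨ha1, ha2, ha3⟩ := c.theta_pos_facts hact
  have hd0pos : 0 < d0 := hy₀
  have hpk : (0:ℝ) < 2^i.1 := zpow_pos two_pos _
  have hpm : (0:ℝ) < 2^m0 := zpow_pos two_pos _
  -- level bounds
  have hkhi : (2:ℝ)^i.1 < 8 / d0 := by
    rw [lt_div_iff₀ hd0pos]
    nlinarith
  have hklo : 1 / (4 * d0) < (2:ℝ)^i.1 := by
    rw [div_lt_iff₀ (by positivity : (0:ℝ) < 4 * d0)]
    nlinarith
  have hkub : i.1 ≤ -m0 + 3 := by
    have : (2:ℝ)^i.1 < 2^(-m0+3) := by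
      have : (8:ℝ) / d0 ≤ 8 / 2^m0 := by
        apply div_le_div_of_nonneg_left (by norm_num) hpm hm1
      calc (2:ℝ)^i.1 < 8 / d0 := hkhi
      _ ≤ 8 / 2^m0 := this
      _ = 2^(-m0+3) := by
          rw [zpow_add₀ (two_ne_zero), zpow_neg,
            (show ((2:ℝ))^(3:ℤ) = 8 by norm_num), div_eq_mul_inv, mul_comm]
    have := (zpow_lt_zpow_iff_right₀ (one_lt_two (α := ℝ))).mp this
    omega
  have hklb : -m0 - 3 ≤ i.1 := by
    have h2m : (2:ℝ)^(m0+1) = 2 * 2^m0 := by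
      rw [zpow_add₀ (two_ne_zero), zpow_one]; ring
    have : (2:ℝ)^(-m0-3) < 2^i.1 := by
      have e : (2:ℝ)^(-m0-3) = 1 / (8 * 2^m0) := by
        rw [show -m0-3 = -(m0+3) by ring, zpow_neg, zpow_add₀ (two_ne_zero),
          (show ((2:ℝ))^(3:ℤ) = 8 by norm_num), one_div, mul_comm]
      have hlt : (1:ℝ) / (8 * 2^m0) < 1 / (4 * d0) := by
        apply div_lt_div_of_pos_left (by norm_num) (by positivity)
        nlinarith
      rw [e]
      exact lt_trans hlt hklo
    have := (zpow_lt_zpow_iff_right₀ (one_lt_two (α := ℝ))).mp this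
    omega
  -- lattice bounds
  have hvb : ∀ j, -(b j) ≤ i.2 j ∧ i.2 j ≤ b j := by
    intro j
    have hcd : dist (y j) (ctr i j) ≤ dist y (ctr i) := coord_dist_le _ _ j
    have hsn : Real.sqrt n ≤ n := sqrt_le_nat n
    have h2 : |y j - (2:ℝ)^(-i.1) * (i.2 j)| < 2 * (n:ℝ) * (2:ℝ)^(-i.1) := by
      have h3 := lt_of_le_of_lt hcd ((c.active_scale hact).2.2)
      rw [ctr_apply] at hcd
      have hinv : (0:ℝ) < (2:ℝ)^(-i.1) := zpow_pos two_pos _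
      calc |y j - (2:ℝ)^(-i.1) * (i.2 j)| = dist (y j) (ctr i j) := by
            rw [ctr_apply, Real.dist_eq]
      _ < 2 * Real.sqrt n * (2:ℝ)^(-i.1) := h3
      _ ≤ 2 * (n:ℝ) * (2:ℝ)^(-i.1) := by nlinarith
    have hinv : (0:ℝ) < (2:ℝ)^(-i.1) := zpow_pos two_pos _
    have hii : (2:ℝ)^i.1 * (2:ℝ)^(-i.1) = 1 := by
      rw [← zpow_add₀ (two_ne_zero)]; norm_num
    have h4 : |(2:ℝ)^i.1 * y j - (i.2 j : ℝ)| < 2 * (n:ℝ) := by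
      have e : (2:ℝ)^i.1 * y j - (i.2 j : ℝ) = (2:ℝ)^i.1 * (y j - (2:ℝ)^(-i.1) * (i.2 j)) := by
        rw [mul_sub, ← mul_assoc, hii, one_mul]
      rw [e, abs_mul, abs_of_pos hpk]
      calc (2:ℝ)^i.1 * |y j - (2:ℝ)^(-i.1) * (i.2 j)| <
            (2:ℝ)^i.1 * (2 * (n:ℝ) * (2:ℝ)^(-i.1)) := mul_lt_mul_of_pos_left h2 hpk
      _ = 2 * (n:ℝ) * ((2:ℝ)^i.1 * (2:ℝ)^(-i.1)) := by ring
      _ = 2 * (n:ℝ) := by rw [hii, mul_one]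
    have h5 : |(2:ℝ)^i.1 * y j - (2:ℝ)^i.1 * y₀ j| < 2 := by
      have : |y j - y₀ j| ≤ dist y y₀ := by
        rw [← Real.dist_eq]; exact coord_dist_le _ _ j
      calc |(2:ℝ)^i.1 * y j - (2:ℝ)^i.1 * y₀ j| = (2:ℝ)^i.1 * |y j - y₀ j| := by
            rw [← mul_sub, abs_mul, abs_of_pos hpk]
      _ ≤ (2:ℝ)^i.1 * dist y y₀ := by
            apply mul_le_mul_of_nonneg_left this (le_of_lt hpk)
      _ < (8 / d0) * (d0 / 4) := by
            apply mul_lt_mul'' hkhi hyd (le_of_lt hpk) dist_nonneg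
      _ = 2 := by field_simp; norm_num
    have h6 : |(2:ℝ)^i.1 * y₀ j| ≤ (2:ℝ)^(-m0+3) * |y₀ j| := by
      rw [abs_mul, abs_of_pos hpk]
      apply mul_le_mul_of_nonneg_right _ (abs_nonneg _)
      exact (zpow_le_zpow_iff_right₀ (one_lt_two (α := ℝ))).mpr hkub
    have h7 : |(i.2 j : ℝ)| < (2:ℝ)^(-m0+3) * |y₀ j| + 2*(n:ℝ) + 2 := by
      have step1 : |(i.2 j : ℝ)| ≤ |(2:ℝ)^i.1 * y j - (i.2 j : ℝ)| + |(2:ℝ)^i.1 * y j| := by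
        calc |(i.2 j : ℝ)| = |((i.2 j : ℝ) - (2:ℝ)^i.1 * y j) + (2:ℝ)^i.1 * y j| := by
              congr 1; ring
        _ ≤ |(i.2 j : ℝ) - (2:ℝ)^i.1 * y j| + |(2:ℝ)^i.1 * y j| := abs_add_le _ _
        _ = |(2:ℝ)^i.1 * y j - (i.2 j : ℝ)| + |(2:ℝ)^i.1 * y j| := by rw [abs_sub_comm]
      have step2 : |(2:ℝ)^i.1 * y j| ≤ |(2:ℝ)^i.1 * y j - (2:ℝ)^i.1 * y₀ j| + |(2:ℝ)^i.1 * y₀ j| := by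
        calc |(2:ℝ)^i.1 * y j| = |((2:ℝ)^i.1 * y j - (2:ℝ)^i.1 * y₀ j) + (2:ℝ)^i.1 * y₀ j| := by
              congr 1; ring
        _ ≤ _ := abs_add_le _ _
      linarith
    have h8 : |(i.2 j : ℝ)| ≤ (b j : ℝ) := by
      calc |(i.2 j : ℝ)| ≤ (2:ℝ)^(-m0+3) * |y₀ j| + 2*(n:ℝ) + 2 := le_of_lt h7
      _ ≤ (b j : ℝ) := Int.le_ceil _
    have h9 : |i.2 j| ≤ b j := by
      have : ((|i.2 j| : ℤ) : ℝ) ≤ ((b j : ℤ) : ℝ) := by push_cast; push_cast at h8; exact h8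
      exact_mod_cast this
    rw [abs_le] at h9
    exact ⟨h9.1, h9.2⟩
  rw [Finset.mem_product]
  constructor
  · rw [Finset.mem_Icc]; exact ⟨hklb, hkub⟩
  · rw [Finset.mem_Icc]
    exact ⟨fun j => (hvb j).1, fun j => (hvb j).2⟩

/-- the key drift estimate: the current value, anchored at an earlier-rank active index,
is well inside the ball of any later-rank active index. -/
lemma step_arith {y : EuclideanSpace ℝ (Fin n)} {i0 j : Idx n}
    (h0 : 0 < c.theta i0 y) (hj : 0 < c.theta j y) (hr : rnk i0 < rnk j) {z : X}
    (hz : dist z (c.φ (c.anc i0)) ≤ c.lam * c.rad i0) :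
    dist z (c.φ (c.anc j)) < c.rad j := by
  set d := c.dK y with hd
  set e0 := (2:ℝ)^(-i0.1) with he0
  set ej := (2:ℝ)^(-j.1) with hej
  obtain ⟨g1, g2, _⟩ := c.active_scale h0
  obtain ⟨g1', g2', _⟩ := c.active_scale hj
  have hdpos : 0 < d := by
    have : (0:ℝ) < e0 := zpow_pos two_pos _
    linarith
  have ha0 : dist y (c.anc i0) ≤ (4*(n:ℝ)+4) * e0 := c.active_anc_dist h0
  have haj : dist y (c.anc j) ≤ (4*(n:ℝ)+4) * ej := c.active_anc_dist hj
  have hphi : dist (c.φ (c.anc i0)) (c.φ (c.anc j)) ≤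
      c.L * ((4*(n:ℝ)+4) * e0 + (4*(n:ℝ)+4) * ej) := by
    have h1 := c.hbi _ (c.anc_mem i0) _ (c.anc_mem j)
    have h2 : ‖c.anc i0 - c.anc j‖ = dist (c.anc i0) (c.anc j) := (dist_eq_norm _ _).symm
    have h3 : dist (c.anc i0) (c.anc j) ≤ (4*(n:ℝ)+4) * e0 + (4*(n:ℝ)+4) * ej := by
      calc dist (c.anc i0) (c.anc j) ≤ dist (c.anc i0) y + dist y (c.anc j) := dist_triangle _ _ _
      _ = dist y (c.anc i0) + dist y (c.anc j) := by rw [dist_comm]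
      _ ≤ _ := add_le_add ha0 haj
    calc dist (c.φ (c.anc i0)) (c.φ (c.anc j)) ≤ c.L * ‖c.anc i0 - c.anc j‖ := h1
    _ = c.L * dist (c.anc i0) (c.anc j) := by rw [h2]
    _ ≤ _ := by
        apply mul_le_mul_of_nonneg_left h3
        linarith [c.hL]
  set P0 := c.Lam^(rnk i0) with hP0
  set Pj := c.Lam^(rnk j) with hPj
  have hL1 := c.hL
  have hlam1 := c.hlam
  have hΛ := c.Lam_one_le
  have hP0pos : 0 < P0 := pow_pos c.Lam_pos _
  have hPjpos : 0 < Pj := pow_pos c.Lam_pos _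
  have hPj1 : 1 ≤ Pj := one_le_pow₀ hΛ
  have hpow : P0 * c.Lam ≤ Pj := by
    rw [hP0, hPj, ← pow_succ]
    exact pow_le_pow_right₀ hΛ hr
  have hcc : (0:ℝ) < 4*(n:ℝ)+4 := by positivity
  have hbeta : c.beta = 32 * c.L * (4*(n:ℝ)+4) := rfl
  have hLam : c.Lam = 32 * c.lam := rfl
  have he0d : e0 < 2 * d := g1
  have hejd : ej < 2 * d := g1'
  have hejlo : d < 4 * ej := g2'
  have he0pos : (0:ℝ) < e0 := zpow_pos two_pos _
  have hejpos : (0:ℝ) < ej := zpow_pos two_pos _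
  -- main chain
  have main : c.lam * c.rad i0 + c.L * ((4*(n:ℝ)+4) * e0 + (4*(n:ℝ)+4) * ej)
      ≤ (3/16) * (Pj * c.beta * d) := by
    have t1 : c.lam * c.rad i0 ≤ (1/16) * (Pj * c.beta * d) := by
      have : c.rad i0 = P0 * c.beta * e0 := rfl
      rw [this]
      have hb := c.beta_pos
      have step : c.lam * (P0 * c.beta * e0) ≤ c.lam * (P0 * c.beta * (2*d)) := by
        apply mul_le_mul_of_nonneg_left _ (by linarith)
        apply mul_le_mul_of_nonneg_left (le_of_lt he0d) (by positivity)
      calc c.lam * (P0 * c.beta * e0) ≤ c.lam * (P0 * c.beta * (2*d)) := step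
      _ = (P0 * (32 * c.lam)) * c.beta * d / 16 := by ring
      _ = (P0 * c.Lam) * c.beta * d / 16 := by rw [← hLam]
      _ ≤ Pj * c.beta * d / 16 := by
          apply div_le_div_of_nonneg_right _ (by norm_num)
          apply mul_le_mul_of_nonneg_right _ (le_of_lt hdpos)
          exact mul_le_mul_of_nonneg_right hpow (le_of_lt hb)
      _ = (1/16) * (Pj * c.beta * d) := by ring
    have t2 : c.L * ((4*(n:ℝ)+4) * e0 + (4*(n:ℝ)+4) * ej) ≤ (2/16) * (Pj * c.beta * d) := by
      have hb := c.beta_pos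
      have step : c.L * ((4*(n:ℝ)+4) * e0 + (4*(n:ℝ)+4) * ej)
          ≤ c.L * ((4*(n:ℝ)+4) * (2*d) + (4*(n:ℝ)+4) * (2*d)) := by
        apply mul_le_mul_of_nonneg_left _ (by linarith)
        apply add_le_add
        · exact mul_le_mul_of_nonneg_left (le_of_lt he0d) (le_of_lt hcc)
        · exact mul_le_mul_of_nonneg_left (le_of_lt hejd) (le_of_lt hcc)
      calc c.L * ((4*(n:ℝ)+4) * e0 + (4*(n:ℝ)+4) * ej)
          ≤ c.L * ((4*(n:ℝ)+4) * (2*d) + (4*(n:ℝ)+4) * (2*d)) := step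
      _ = (2/16) * ((32 * c.L * (4*(n:ℝ)+4)) * d) := by ring
      _ = (2/16) * (c.beta * d) := by rw [← hbeta]
      _ ≤ (2/16) * (Pj * c.beta * d) := by
          have : c.beta * d ≤ Pj * (c.beta * d) := le_mul_of_one_le_left (by positivity) hPj1
          calc (2/16 : ℝ) * (c.beta * d) ≤ (2/16) * (Pj * (c.beta * d)) := by
                apply mul_le_mul_of_nonneg_left this (by norm_num)
          _ = (2/16) * (Pj * c.beta * d) := by ring
    linarith
  have hfinal : (3/16) * (Pj * c.beta * d) < c.rad j := by
    have : c.rad j = Pj * c.beta * ej := rfl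
    rw [this]
    have hb := c.beta_pos
    have h4 : (3/16 : ℝ) * (Pj * c.beta * d) < (1/4) * (Pj * c.beta * d) := by
      have : (0:ℝ) < Pj * c.beta * d := by positivity
      nlinarith
    have h5 : (1/4 : ℝ) * (Pj * c.beta * d) < Pj * c.beta * ej := by
      have hq : (0:ℝ) < Pj * c.beta := by positivity
      calc (1/4 : ℝ) * (Pj * c.beta * d) = (Pj * c.beta) * (d / 4) := by ring
      _ < (Pj * c.beta) * ej := by
          apply mul_lt_mul_of_pos_left _ hq
          linarith
    linarith
  calc dist z (c.φ (c.anc j)) ≤ dist z (c.φ (c.anc i0)) + dist (c.φ (c.anc i0)) (c.φ (c.anc j)) :=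
        dist_triangle _ _ _
  _ ≤ c.lam * c.rad i0 + c.L * ((4*(n:ℝ)+4) * e0 + (4*(n:ℝ)+4) * ej) := add_le_add hz hphi
  _ ≤ (3/16) * (Pj * c.beta * d) := main
  _ < c.rad j := hfinal

/-- **the invariant**: after any stage past a full reset, the current value is anchored at an
active index of earlier rank. -/
lemma invariant : ∀ m : ℕ, m ≤ M n → ∀ y : EuclideanSpace ℝ (Fin n),
    0 < c.dK y → c.dK y < c.delta →
    (∃ i : Idx n, rnk i < m ∧ c.theta i y = 1) →
    ∃ i0 : Idx n, 0 < c.theta i0 y ∧ rnk i0 < m ∧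
      dist (c.zf m y) (c.φ (c.anc i0)) ≤ c.lam * c.rad i0 := by
  intro m
  induction m with
  | zero => intro _ y _ _ ⟨i, hi, _⟩; omega
  | succ m ih =>
    intro hm1 y hy hyδ hpre
    have hm : m < M n := by omega
    set col := (eqv n).symm ⟨m, hm⟩ with hcol
    rw [c.zf_succ hm y]
    by_cases hact : ∃ j : Idx n, colr j = col ∧ 0 < c.theta j y
    · obtain ⟨j, hjcol, hjact⟩ := hact
      have hrj : rnk j = m := rnk_colr_symm hm hjcol
      have hFeq : c.Fc col y (c.zf m y) = c.Ghat j (c.theta j y) (c.zf m y) :=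
        c.Fc_of_active hjcol hjact _
      rw [hFeq]
      have hradR : c.rad j < c.R := c.rad_lt_R hjact hyδ
      by_cases hone : c.theta j y = 1
      · rw [hone, c.Ghat_one hradR]
        refine ⟨j, hjact, by omega, ?_⟩
        rw [dist_self]
        have := c.rad_pos j
        have := c.hlam
        positivity
      · -- get an earlier anchor
        have hpre' : ∃ i : Idx n, rnk i < m ∧ c.theta i y = 1 := by
          obtain ⟨i, hilt, hione⟩ := hpre
          rcases Nat.lt_succ_iff_lt_or_eq.mp hilt with h | h
          · exact ⟨i, h, hione⟩
          · exfalso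
            have hicol : colr i = col := by
              rw [hcol]
              apply_fun (eqv n) using (eqv n).injective
              rw [Equiv.apply_symm_apply]
              exact Fin.ext h
            have : i = j := c.active_unique (by rw [hione]; norm_num) hjact
              (hicol.trans hjcol.symm)
            rw [← this] at hone
            exact hone hione
        obtain ⟨i0, h0act, h0lt, h0dist⟩ := ih (by omega) y hy hyδ hpre'
        by_cases hth : c.theta j y ≤ 1/3
        · rw [c.Ghat_of_le hth]
          exact ⟨i0, h0act, by omega, h0dist⟩
        · push_neg at hth
          have hball : c.zf m y ∈ Metric.ball (c.φ (c.anc j)) (c.rad j) :=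
            c.step_arith h0act hjact (by omega) h0dist
          have hmem := c.Ghat_mem hradR hth (c.theta_le_one j y) hball
          refine ⟨j, hjact, by omega, ?_⟩
          exact le_of_lt (Metric.mem_ball.mp hmem)
    · -- no active index of this color: identity stage
      have hFeq : c.Fc col y (c.zf m y) = c.zf m y := by
        rw [Fc, dif_neg hact]
      rw [hFeq]
      have hpre' : ∃ i : Idx n, rnk i < m ∧ c.theta i y = 1 := by
        obtain ⟨i, hilt, hione⟩ := hpre
        rcases Nat.lt_succ_iff_lt_or_eq.mp hilt with h | h
        · exact ⟨i, h, hione⟩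
        · exfalso
          apply hact
          refine ⟨i, ?_, by rw [hione]; norm_num⟩
          rw [hcol]
          apply_fun (eqv n) using (eqv n).injective
          rw [Equiv.apply_symm_apply]
          exact Fin.ext h
      obtain ⟨i0, h0act, h0lt, h0dist⟩ := ih (by omega) y hy hyδ hpre'
      exact ⟨i0, h0act, by omega, h0dist⟩

lemma colr_symm_rnk (i : Idx n) : (eqv n).symm ⟨rnk i, rnk_lt i⟩ = colr i := by
  rw [Equiv.symm_apply_eq]
  exact Fin.ext rfl

/-- continuity of the final stage map at points off `K` inside `U` -/
lemma cont_interior {y₀ : EuclideanSpace ℝ (Fin n)} (hy : 0 < c.dK y₀)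
    (hyδ : c.dK y₀ < c.delta) : ContinuousAt (c.zf (M n)) y₀ := by
  obtain ⟨istar, V, hVopen, hyV, hVone⟩ := c.exists_reset hy
  obtain ⟨S, hS⟩ := c.finite_active hy
  set mstar := rnk istar with hmstar
  have hms : mstar < M n := rnk_lt istar
  have EV1 : ∀ᶠ y in nhds y₀, ∀ i : Idx n, 0 < c.theta i y → i ∈ S := by
    have : Metric.ball y₀ (c.dK y₀ / 4) ∈ nhds y₀ :=
      Metric.ball_mem_nhds y₀ (by linarith)
    exact Filter.eventually_of_mem this (fun y hy' i hi => hS y hy' i hi)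
  have EV2 : ∀ᶠ y in nhds y₀, c.theta istar y = 1 :=
    Filter.eventually_of_mem (hVopen.mem_nhds hyV) hVone
  have EV3 : ∀ᶠ y in nhds y₀, c.dK y < c.delta :=
    (c.dK_continuous.continuousAt (x := y₀)).eventually_lt_const hyδ
  have EV4 : ∀ᶠ y in nhds y₀, 0 < c.dK y :=
    (c.dK_continuous.continuousAt (x := y₀)).eventually_const_lt hy
  have key : ∀ m, mstar + 1 ≤ m → m ≤ M n → ContinuousAt (c.zf m) y₀ := by
    intro m hm1
    induction m, hm1 using Nat.le_induction with
    | base =>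
      intro _
      have heq : c.zf (mstar+1) =ᶠ[nhds y₀] fun _ => c.φ (c.anc istar) := by
        filter_upwards [EV2, EV3] with y h1 h3
        rw [c.zf_succ hms y]
        have hcol : colr istar = (eqv n).symm ⟨mstar, hms⟩ := (colr_symm_rnk istar).symm
        have hact : 0 < c.theta istar y := by rw [h1]; norm_num
        rw [c.Fc_of_active hcol hact, h1]
        exact c.Ghat_one (c.rad_lt_R hact h3) _
      exact continuousAt_const.congr heq.symm
    | succ m hm ih =>
      intro hm2
      have hmM : m < M n := by omega
      have IH : ContinuousAt (c.zf m) y₀ := ih (by omega)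
      set colm := (eqv n).symm ⟨m, hmM⟩ with hcolm
      by_cases hact : ∃ j : Idx n, colr j = colm ∧ 0 < c.theta j y₀
      · obtain ⟨j, hjcol, hjact⟩ := hact
        have hrj : rnk j = m := rnk_colr_symm hmM hjcol
        -- all other same-colored indices are eventually small
        have EV5 : ∀ᶠ y in nhds y₀, ∀ i ∈ S, colr i = colm → i ≠ j → c.theta i y < 1/3 := by
          rw [eventually_all_finset]
          intro i hiS
          by_cases hic : colr i = colm
          · by_cases hij : i = j
            · filter_upwards with y h1 h2; exact absurd hij h2
            · have hz : c.theta i y₀ = 0 := by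
                by_contra hnz
                have hpos : 0 < c.theta i y₀ :=
                  lt_of_le_of_ne (c.theta_nonneg i y₀) (Ne.symm hnz)
                exact hij (c.active_unique hpos hjact (hic.trans hjcol.symm))
              have t : Filter.Tendsto (fun y => c.theta i y) (nhds y₀)
                  (nhds (c.theta i y₀)) := (c.theta_continuous i).tendsto y₀
              rw [hz] at t
              filter_upwards [t.eventually_lt_const (by norm_num : (0:ℝ) < 1/3)]
                with y hy' _ _
              exact hy'
          · filter_upwards with y h1; exact absurd h1 hic
        have EV6 : c.zf (m+1) =ᶠ[nhds y₀] fun y => c.Ghat j (c.theta j y) (c.zf m y) := by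
          filter_upwards [EV1, EV5] with y h1 h5
          rw [c.zf_succ hmM y]
          apply c.Fc_congr hjcol
          intro i hic hij
          by_cases hpos : 0 < c.theta i y
          · exact le_of_lt (h5 i (h1 i hpos) hic hij)
          · push_neg at hpos; linarith
        by_cases hsmall : c.theta j y₀ < 1/3
        · have EVs : ∀ᶠ y in nhds y₀, c.theta j y < 1/3 :=
            ((c.theta_continuous j).continuousAt (x := y₀)).eventually_lt_const hsmall
          have heq : c.zf (m+1) =ᶠ[nhds y₀] c.zf m := by
            filter_upwards [EV6, EVs] with y h6 hsy
            rw [h6, c.Ghat_of_le (le_of_lt hsy)]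
          exact IH.congr heq.symm
        · push_neg at hsmall
          have hradR : c.rad j < c.R := c.rad_lt_R hjact hyδ
          have hball : c.zf m y₀ ∈ Metric.ball (c.φ (c.anc j)) (c.rad j) := by
            obtain ⟨i0, h0act, h0lt, h0dist⟩ := c.invariant m (le_of_lt hmM) y₀ hy hyδ
              ⟨istar, by omega, hVone y₀ hyV⟩
            exact c.step_arith h0act hjact (by omega) h0dist
          set P : EuclideanSpace ℝ (Fin n) → ℝ × X := fun y => (c.theta j y, c.zf m y) with hP
          have hPcont : ContinuousAt P y₀ :=
            ((c.theta_continuous j).continuousAt (x := y₀)).prodMk IH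
          have hPmem : P y₀ ∈ Set.Icc (0:ℝ) 1 ×ˢ Metric.ball (c.φ (c.anc j)) (c.rad j) :=
            ⟨⟨c.theta_nonneg j y₀, c.theta_le_one j y₀⟩, hball⟩
          have hG := (c.Ghat_cont hradR).continuousWithinAt hPmem
          have hEVmem : ∀ᶠ y in nhds y₀,
              P y ∈ Set.Icc (0:ℝ) 1 ×ˢ Metric.ball (c.φ (c.anc j)) (c.rad j) := by
            have hb : ∀ᶠ y in nhds y₀, c.zf m y ∈ Metric.ball (c.φ (c.anc j)) (c.rad j) := by
              have := IH.preimage_mem_nhds (Metric.isOpen_ball.mem_nhds hball)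
              exact Filter.eventually_of_mem this (fun y hy' => hy')
            filter_upwards [hb] with y hy'
            exact ⟨⟨c.theta_nonneg j y, c.theta_le_one j y⟩, hy'⟩
          have hgcont : ContinuousAt (fun y => c.Ghat j (c.theta j y) (c.zf m y)) y₀ :=
            hG.tendsto.comp (tendsto_nhdsWithin_iff.mpr ⟨hPcont, hEVmem⟩)
          exact hgcont.congr EV6.symm
      · -- no active index of this color
        have EV5 : ∀ᶠ y in nhds y₀, ∀ i ∈ S, colr i = colm → c.theta i y < 1/3 := by
          rw [eventually_all_finset]
          intro i hiS
          by_cases hic : colr i = colm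
          · have hz : c.theta i y₀ = 0 := by
              by_contra hnz
              exact hact ⟨i, hic, lt_of_le_of_ne (c.theta_nonneg i y₀) (Ne.symm hnz)⟩
            have t : Filter.Tendsto (fun y => c.theta i y) (nhds y₀)
                (nhds (c.theta i y₀)) := (c.theta_continuous i).tendsto y₀
            rw [hz] at t
            filter_upwards [t.eventually_lt_const (by norm_num : (0:ℝ) < 1/3)]
              with y hy' _
            exact hy'
          · filter_upwards with y h1; exact absurd h1 hic
        have heq : c.zf (m+1) =ᶠ[nhds y₀] c.zf m := by
          filter_upwards [EV1, EV5] with y h1 h5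
          rw [c.zf_succ hmM y]
          apply c.Fc_eq_id
          intro i hic
          by_cases hpos : 0 < c.theta i y
          · exact le_of_lt (h5 i (h1 i hpos) hic)
          · push_neg at hpos; linarith
        exact IH.congr heq.symm
  exact key (M n) (by omega) (le_refl _)

open Classical in
/-- the extension -/
def phibar (y : EuclideanSpace ℝ (Fin n)) : X :=
  if y ∈ c.K then c.φ y else c.zf (M n) y

lemma phibar_of_mem {y : EuclideanSpace ℝ (Fin n)} (hy : y ∈ c.K) : c.phibar y = c.φ y := by
  rw [phibar, if_pos hy]

lemma phibar_of_not_mem {y : EuclideanSpace ℝ (Fin n)} (hy : y ∉ c.K) :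
    c.phibar y = c.zf (M n) y := by
  rw [phibar, if_neg hy]

end Ctx

/-- the final constant -/
def Cconst (n : ℕ) (L lam : ℝ) : ℝ :=
  L * (1 + 2*(4*(n:ℝ)+4)) + 2 * lam * (32*lam)^(M n) * (32 * L * (4*(n:ℝ)+4))

lemma Cconst_pos {n : ℕ} {L lam : ℝ} (hL : 1 ≤ L) (hlam : 1 ≤ lam) :
    0 < Cconst n L lam := by
  unfold Cconst
  have h1 : (0:ℝ) ≤ (n:ℝ) := Nat.cast_nonneg n
  have hlam0 : (0:ℝ) < lam := by linarith
  have hL0 : (0:ℝ) < L := by linarith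
  have h2 : (0:ℝ) ≤ 2 * lam * (32*lam)^(M n) * (32 * L * (4*(n:ℝ)+4)) := by positivity
  have h3 : (0:ℝ) < L * (1 + 2*(4*(n:ℝ)+4)) := by positivity
  linarith

namespace Ctx

variable {n : ℕ} {X : Type u} [MetricSpace X] (c : Ctx n X)

/-- the main estimate -/
lemma estimate {x : EuclideanSpace ℝ (Fin n)} (hx : x ∈ c.K)
    {y : EuclideanSpace ℝ (Fin n)} (hyδ : c.dK y < c.delta) :
    dist (c.φ x) (c.phibar y) ≤ Cconst n c.L c.lam * dist x y := by
  have h1 : (0:ℝ) ≤ (n:ℝ) := Nat.cast_nonneg n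
  have hL := c.hL
  have hlam := c.hlam
  have hP : (0:ℝ) < (32*c.lam)^(M n) := by positivity
  by_cases hyK : y ∈ c.K
  · rw [c.phibar_of_mem hyK]
    calc dist (c.φ x) (c.φ y) ≤ c.L * ‖x - y‖ := c.hbi x hx y hyK
    _ = c.L * dist x y := by rw [dist_eq_norm]
    _ ≤ Cconst n c.L c.lam * dist x y := by
        apply mul_le_mul_of_nonneg_right _ dist_nonneg
        unfold Cconst
        have hlam0 : (0:ℝ) < c.lam := by linarith
        have hL0 : (0:ℝ) < c.L := by linarith
        have h2 : (0:ℝ) ≤ 2 * c.lam * (32*c.lam)^(M n) * (32 * c.L * (4*(n:ℝ)+4)) := by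
          positivity
        nlinarith
  · rw [c.phibar_of_not_mem hyK]
    have hdpos : 0 < c.dK y := c.dK_pos hyK
    obtain ⟨istar, V, _, hyV, hVone⟩ := c.exists_reset hdpos
    obtain ⟨i0, h0act, _, h0dist⟩ := c.invariant (M n) le_rfl y hdpos hyδ
      ⟨istar, rnk_lt istar, hVone y hyV⟩
    obtain ⟨g1, _, _⟩ := c.active_scale h0act
    have ha0 : dist y (c.anc i0) ≤ (4*(n:ℝ)+4) * (2:ℝ)^(-i0.1) := c.active_anc_dist h0act
    have hdxy : c.dK y ≤ dist x y := by
      rw [dist_comm]; exact c.dK_le_dist hx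
    have he0pos : (0:ℝ) < (2:ℝ)^(-i0.1) := zpow_pos two_pos _
    -- bound on the radius term
    have hrad : c.lam * c.rad i0 ≤ 2 * c.lam * (32*c.lam)^(M n) * (32 * c.L * (4*(n:ℝ)+4)) *
        c.dK y := by
      have hLam : c.Lam = 32 * c.lam := rfl
      have hbeta : c.beta = 32 * c.L * (4*(n:ℝ)+4) := rfl
      have hpow : c.Lam^(rnk i0) ≤ c.Lam^(M n) :=
        pow_le_pow_right₀ c.Lam_one_le (le_of_lt (rnk_lt i0))
      have hradle : c.rad i0 ≤ c.Lam^(M n) * c.beta * (2 * c.dK y) := by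
        have hb := c.beta_pos
        calc c.rad i0 = c.Lam^(rnk i0) * c.beta * (2:ℝ)^(-i0.1) := rfl
        _ ≤ c.Lam^(rnk i0) * c.beta * (2 * c.dK y) := by
            apply mul_le_mul_of_nonneg_left (le_of_lt g1)
              (mul_nonneg (le_of_lt (pow_pos c.Lam_pos _)) (le_of_lt c.beta_pos))
        _ ≤ c.Lam^(M n) * c.beta * (2 * c.dK y) := by
            apply mul_le_mul_of_nonneg_right
              (mul_le_mul_of_nonneg_right hpow (le_of_lt hb)) (by linarith)
      calc c.lam * c.rad i0 ≤ c.lam * (c.Lam^(M n) * c.beta * (2 * c.dK y)) := by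
            apply mul_le_mul_of_nonneg_left hradle (by linarith)
      _ = 2 * c.lam * c.Lam^(M n) * c.beta * c.dK y := by ring
      _ = 2 * c.lam * (32*c.lam)^(M n) * (32 * c.L * (4*(n:ℝ)+4)) * c.dK y := by
            rw [← hLam, ← hbeta]
    -- bound on the anchor displacement
    have hanc : dist x (c.anc i0) ≤ dist x y + (4*(n:ℝ)+4) * (2 * c.dK y) := by
      calc dist x (c.anc i0) ≤ dist x y + dist y (c.anc i0) := dist_triangle _ _ _
      _ ≤ dist x y + (4*(n:ℝ)+4) * (2:ℝ)^(-i0.1) := by linarith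
      _ ≤ dist x y + (4*(n:ℝ)+4) * (2 * c.dK y) := by
          have : (4*(n:ℝ)+4) * (2:ℝ)^(-i0.1) ≤ (4*(n:ℝ)+4) * (2 * c.dK y) :=
            mul_le_mul_of_nonneg_left (le_of_lt g1) (by positivity)
          linarith
    have hphi : dist (c.φ x) (c.φ (c.anc i0)) ≤
        c.L * (dist x y + (4*(n:ℝ)+4) * (2 * c.dK y)) := by
      calc dist (c.φ x) (c.φ (c.anc i0)) ≤ c.L * ‖x - c.anc i0‖ :=
            c.hbi x hx _ (c.anc_mem i0)
      _ = c.L * dist x (c.anc i0) := by rw [dist_eq_norm]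
      _ ≤ _ := mul_le_mul_of_nonneg_left hanc (by linarith)
    calc dist (c.φ x) (c.zf (M n) y)
        ≤ dist (c.φ x) (c.φ (c.anc i0)) + dist (c.zf (M n) y) (c.φ (c.anc i0)) := by
          rw [dist_comm (c.zf (M n) y)]; exact dist_triangle _ _ _
    _ ≤ c.L * (dist x y + (4*(n:ℝ)+4) * (2 * c.dK y)) +
          2 * c.lam * (32*c.lam)^(M n) * (32 * c.L * (4*(n:ℝ)+4)) * c.dK y := by
          linarith
    _ ≤ Cconst n c.L c.lam * dist x y := by
          unfold Cconst
          have hlam0 : (0:ℝ) < c.lam := by linarith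
          have hL0 : (0:ℝ) < c.L := by linarith
          have hE : (0:ℝ) ≤ 2 * c.lam * (32*c.lam)^(M n) * (32 * c.L * (4*(n:ℝ)+4)) := by
            positivity
          have f1 : 2 * c.lam * (32*c.lam)^(M n) * (32 * c.L * (4*(n:ℝ)+4)) * c.dK y ≤
              2 * c.lam * (32*c.lam)^(M n) * (32 * c.L * (4*(n:ℝ)+4)) * dist x y :=
            mul_le_mul_of_nonneg_left hdxy hE
          have hLcc : (0:ℝ) ≤ c.L * ((4*(n:ℝ)+4) * 2) := by positivity
          have f2 : c.L * ((4*(n:ℝ)+4) * 2) * c.dK y ≤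
              c.L * ((4*(n:ℝ)+4) * 2) * dist x y := mul_le_mul_of_nonneg_left hdxy hLcc
          nlinarith [f1, f2]

end Ctx

end LLCExt


end

/-- **Lemma 4.2 (controlled continuous extension of bi-Lipschitz maps).** For every `n ≥ 1`,
`L ≥ 1` and `λ ≥ 1` there is `C > 0` such that every `L`-bi-Lipschitz map `φ` from a nonempty
compact set `K ⊆ ℝⁿ` into a `(λ,R)`-linearly locally contractible subset `B` of a metric
space `X` admits a continuous extension `φ̄` to an open neighborhood `U` of `K` with
`d(φ(x), φ̄(y)) ≤ C ‖x − y‖` for all `x ∈ K`, `y ∈ U`. -/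
theorem controlled_extension_of_biLipschitz_into_llc
    (n : ℕ) (hn : 1 ≤ n) (L lam : ℝ) (hL : 1 ≤ L) (hlam : 1 ≤ lam) :
    ∃ C : ℝ, 0 < C ∧
      ∀ (R : ℝ), 0 < R →
      ∀ (X : Type u) [MetricSpace X],
      ∀ (B : Set X), IsLLCSubset lam R B →
      ∀ (K : Set (EuclideanSpace ℝ (Fin n))), K.Nonempty → IsCompact K →
      ∀ (φ : EuclideanSpace ℝ (Fin n) → X),
        (∀ a ∈ K, ∀ b ∈ K,
          L⁻¹ * ‖a - b‖ ≤ dist (φ a) (φ b) ∧ dist (φ a) (φ b) ≤ L * ‖a - b‖) →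
        (∀ a ∈ K, φ a ∈ B) →
        ∃ U : Set (EuclideanSpace ℝ (Fin n)), IsOpen U ∧ K ⊆ U ∧
          ∃ φbar : EuclideanSpace ℝ (Fin n) → X, ContinuousOn φbar U ∧
            (∀ a ∈ K, φbar a = φ a) ∧
            ∀ x ∈ K, ∀ y ∈ U, dist (φ x) (φbar y) ≤ C * ‖x - y‖ := by
  refine ⟨LLCExt.Cconst n L lam, LLCExt.Cconst_pos hL hlam, ?_⟩
  intro R hR X _ B hB K hKne hKc φ hbi hmem
  set c : LLCExt.Ctx n X :=
    ⟨L, lam, R, B, K, φ, hL, hlam, hR, hB, hKne, hKc,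
      (fun a ha b hb => (hbi a ha b hb).2), hmem, hn⟩ with hc
  refine ⟨{y | c.dK y < c.delta}, ?_, ?_, c.phibar, ?_, ?_, ?_⟩
  · exact isOpen_lt c.dK_continuous continuous_const
  · intro a ha
    simp only [Set.mem_setOf_eq]
    rw [c.dK_eq_zero ha]
    exact c.delta_pos
  · intro y₀ hy₀
    by_cases hyK : y₀ ∈ K
    · rw [Metric.continuousWithinAt_iff]
      intro ε hε
      have hC : 0 < LLCExt.Cconst n L lam := LLCExt.Cconst_pos hL hlam
      refine ⟨ε / (LLCExt.Cconst n L lam + 1), by positivity, ?_⟩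
      intro y hyU hyd
      simp only [Set.mem_setOf_eq] at hyU
      have h1 : dist (c.phibar y) (c.phibar y₀) ≤ LLCExt.Cconst n L lam * dist y₀ y := by
        rw [c.phibar_of_mem hyK, dist_comm]
        exact c.estimate hyK hyU
      have h2 : dist y₀ y < ε / (LLCExt.Cconst n L lam + 1) := by rw [dist_comm]; exact hyd
      calc dist (c.phibar y) (c.phibar y₀) ≤ LLCExt.Cconst n L lam * dist y₀ y := h1
      _ ≤ LLCExt.Cconst n L lam * (ε / (LLCExt.Cconst n L lam + 1)) := by
          apply mul_le_mul_of_nonneg_left (le_of_lt h2) (le_of_lt hC)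
      _ < ε := by
          rw [mul_div_assoc']
          rw [div_lt_iff₀ (by linarith)]
          nlinarith
    · simp only [Set.mem_setOf_eq] at hy₀
      have h0 : 0 < c.dK y₀ := c.dK_pos hyK
      have hcont := c.cont_interior h0 hy₀
      have heq : c.phibar =ᶠ[nhds y₀] c.zf (LLCExt.M n) := by
        filter_upwards [c.hK.isClosed.isOpen_compl.mem_nhds hyK] with y hy
        exact c.phibar_of_not_mem hy
      exact (hcont.congr heq.symm).continuousWithinAt
  · intro a ha
    exact c.phibar_of_mem ha
  · intro x hx y hyU
    simp only [Set.mem_setOf_eq] at hyU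
    have h := c.estimate hx hyU
    calc dist (φ x) (c.phibar y) ≤ LLCExt.Cconst n L lam * dist x y := h
    _ = LLCExt.Cconst n L lam * ‖x - y‖ := by rw [dist_eq_norm]
end

section
/- Let n ≥ 1, let X be a metric space, let K ⊆ ℝⁿ be a Lebesgue-measurable set, let U ⊆ ℝⁿ be an open set with K ⊆ U, and let L ≥ 1, C ≥ 1. Let Φ : ℝⁿ → X be a map such that ‖a − b‖ ≤ L·d(Φ(a),Φ(b)) for all a,b ∈ K and d(Φ(a),Φ(u)) ≤ C‖a − u‖ for all a ∈ K and u ∈ U. If z ∈ K is a Lebesgue density point of K, then there exists r > 0 such that d(Φ(z), Φ(u)) ≥ ‖u − z‖/(2L) for every u ∈ B(z,r) ∩ U; in particular Φ(u) ≠ Φ(z) for every u ∈ (B(z,r) ∩ U) \ {z}. -/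
open Metric Set MeasureTheory
open scoped NNReal Topology ENNReal

/-- **Separation near a density point (first step of Lemma 4.3).** Let `K ⊆ ℝⁿ` be measurable,
`U ⊇ K` open, and `Φ : ℝⁿ → X` a map into a metric space which is lower `L`-bi-Lipschitz on
`K` and satisfies `d(Φ(a), Φ(u)) ≤ C‖a − u‖` for `a ∈ K`, `u ∈ U`. Then near a Lebesgue
density point `z` of `K` one has `d(Φ(z), Φ(u)) ≥ ‖u − z‖/(2L)`; in particular
`Φ(u) ≠ Φ(z)` for `u ≠ z` near `z`. -/
theorem separation_near_density_point
    (n : ℕ) (hn : 1 ≤ n) {X : Type*} [MetricSpace X]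
    (K : Set (EuclideanSpace ℝ (Fin n))) (hKmeas : MeasurableSet K)
    (U : Set (EuclideanSpace ℝ (Fin n))) (hUopen : IsOpen U) (hKU : K ⊆ U)
    (L C : ℝ) (hL : 1 ≤ L) (hC : 1 ≤ C)
    (Φ : EuclideanSpace ℝ (Fin n) → X)
    (hlow : ∀ a ∈ K, ∀ b ∈ K, ‖a - b‖ ≤ L * dist (Φ a) (Φ b))
    (hext : ∀ a ∈ K, ∀ u ∈ U, dist (Φ a) (Φ u) ≤ C * ‖a - u‖)
    (z : EuclideanSpace ℝ (Fin n)) (hz : z ∈ K)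
    (hdens : Filter.Tendsto
      (fun r : ℝ => volume (K ∩ Metric.ball z r) / volume (Metric.ball z r))
      (nhdsWithin (0 : ℝ) (Set.Ioi 0)) (nhds (1 : ℝ≥0∞))) :
    ∃ r : ℝ, 0 < r ∧ ∀ u ∈ Metric.ball z r ∩ U,
      ‖u - z‖ / (2 * L) ≤ dist (Φ z) (Φ u) ∧ (u ≠ z → Φ u ≠ Φ z) := by
  haveI : NeZero n := ⟨by omega⟩
  have hL0 : (0:ℝ) < L := lt_of_lt_of_le one_pos hL
  have hC0 : (0:ℝ) < C := lt_of_lt_of_le one_pos hC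
  have hLC : (0:ℝ) < 1 + L * C := by positivity
  set ε : ℝ := 1 / (2 * (1 + L * C)) with hε_def
  have hε0 : 0 < ε := by positivity
  have hεeq : ε * (2 * (1 + L * C)) = 1 := by
    rw [hε_def]; field_simp
  set c : ℝ := (ε / (1 + ε)) ^ n with hc_def
  have hc0 : 0 < c := by positivity
  have hc1 : c ≤ 1 := by
    apply pow_le_one₀ (by positivity)
    rw [div_le_one (by linarith)]; linarith
  set c' : ℝ≥0∞ := ENNReal.ofReal c with hc'_def
  have hc'0 : c' ≠ 0 := ne_of_gt (ENNReal.ofReal_pos.2 hc0)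
  have hc'1 : c' ≤ 1 := ENNReal.ofReal_le_one.2 hc1
  have hev : ∀ᶠ s in nhdsWithin (0:ℝ) (Set.Ioi 0),
      1 - c' < volume (K ∩ Metric.ball z s) / volume (Metric.ball z s) :=
    Filter.Tendsto.eventually_const_lt
      (ENNReal.sub_lt_self ENNReal.one_ne_top one_ne_zero hc'0) hdens
  rw [eventually_nhdsWithin_iff, Metric.eventually_nhds_iff] at hev
  obtain ⟨r0, hr0, H⟩ := hev
  refine ⟨r0 / (1 + ε), by positivity, ?_⟩
  rintro u ⟨hub, huU⟩
  rcases eq_or_ne u z with rfl | huz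
  · simp
  -- main case: u ≠ z
  have ht : (0:ℝ) < ‖u - z‖ := by
    rw [norm_sub_pos_iff]; exact huz
  set t : ℝ := ‖u - z‖ with ht_def
  set s : ℝ := (1 + ε) * t with hs_def
  have hs0 : 0 < s := by positivity
  have hsr0 : s < r0 := by
    have : t < r0 / (1 + ε) := by
      rw [mem_ball, dist_eq_norm] at hub; exact hub
    calc s = (1 + ε) * t := rfl
    _ < (1 + ε) * (r0 / (1 + ε)) := by
        apply mul_lt_mul_of_pos_left this (by linarith)
    _ = r0 := by field_simp
  -- find a point of K close to u
  have key : ∃ a ∈ K, dist a u < ε * t := by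
    by_contra hcon
    push_neg at hcon
    have hsub : Metric.ball u (ε * t) ⊆ Metric.ball z s := by
      intro x hx
      rw [mem_ball] at hx ⊢
      have : dist u z = t := by rw [dist_eq_norm]
      calc dist x z ≤ dist x u + dist u z := dist_triangle _ _ _
      _ < ε * t + t := by rw [this]; linarith
      _ = s := by ring
    have hdisj : Disjoint (K ∩ Metric.ball z s) (Metric.ball u (ε * t)) := by
      rw [Set.disjoint_left]
      rintro x ⟨hxK, -⟩ hxb
      exact absurd (hcon x hxK) (not_le.2 (by rwa [mem_ball] at hxb))
    have hsum : volume (K ∩ Metric.ball z s) + volume (Metric.ball u (ε * t))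
        ≤ volume (Metric.ball z s) := by
      rw [← measure_union hdisj measurableSet_ball]
      exact measure_mono (Set.union_subset Set.inter_subset_right hsub)
    have hb : volume (Metric.ball u (ε * t)) = c' * volume (Metric.ball z s) := by
      rw [Measure.addHaar_ball volume u (by positivity : (0:ℝ) ≤ ε * t),
        Measure.addHaar_ball volume z hs0.le, finrank_euclideanSpace_fin,
        ← mul_assoc, hc'_def, ← ENNReal.ofReal_mul hc0.le]
      congr 2
      rw [hc_def, ← mul_pow, hs_def]
      congr 1
      field_simp
    have hV0 : volume (Metric.ball z s) ≠ 0 := ne_of_gt (measure_ball_pos volume z hs0)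
    have hVt : volume (Metric.ball z s) ≠ ⊤ := measure_ball_lt_top.ne
    have hds : dist s 0 < r0 := by
      rw [Real.dist_eq, sub_zero, abs_of_pos hs0]; exact hsr0
    have hrat := H hds hs0
    rw [ENNReal.lt_div_iff_mul_lt (Or.inl hV0) (Or.inl hVt)] at hrat
    have heq : (1 - c') * volume (Metric.ball z s) + c' * volume (Metric.ball z s)
        = volume (Metric.ball z s) := by
      rw [← add_mul, tsub_add_cancel_of_le hc'1, one_mul]
    have hlt : (1 - c') * volume (Metric.ball z s) + c' * volume (Metric.ball z s)
        < volume (Metric.ball z s) :=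
      lt_of_lt_of_le (by
        apply ENNReal.add_lt_add_right _ hrat
        exact ENNReal.mul_ne_top (by
          exact ne_of_lt (lt_of_le_of_lt hc'1 ENNReal.one_lt_top)) hVt)
        (hb ▸ hsum)
    exact absurd heq (ne_of_lt hlt)
  obtain ⟨a, haK, hau⟩ := key
  have h1 : ‖a - z‖ ≤ L * dist (Φ a) (Φ z) := hlow a haK z hz
  have h2 : dist (Φ a) (Φ u) ≤ C * ‖a - u‖ := hext a haK u huU
  have h3 : ‖a - u‖ < ε * t := by rwa [← dist_eq_norm]
  have h4 : t - ε * t ≤ ‖a - z‖ := by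
    have htri : ‖u - z‖ ≤ ‖u - a‖ + ‖a - z‖ := norm_sub_le_norm_sub_add_norm_sub u a z
    have : ‖u - a‖ < ε * t := by rwa [norm_sub_rev]
    linarith [htri]
  have h5 : dist (Φ a) (Φ z) ≤ dist (Φ a) (Φ u) + dist (Φ u) (Φ z) := dist_triangle _ _ _
  have h6 : dist (Φ u) (Φ z) = dist (Φ z) (Φ u) := dist_comm _ _
  set D : ℝ := dist (Φ z) (Φ u) with hD_def
  have hA : dist (Φ a) (Φ u) ≤ C * (ε * t) :=
    h2.trans (mul_le_mul_of_nonneg_left h3.le hC0.le)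
  have h7 : L * (C * (ε * t) + D) = t / 2 - ε * t + L * D := by
    linear_combination (t / 2) * hεeq
  have h5' : dist (Φ a) (Φ z) ≤ C * (ε * t) + D := by
    rw [← h6]; linarith [h5, hA]
  have h8 : ‖a - z‖ ≤ L * (C * (ε * t) + D) :=
    h1.trans (mul_le_mul_of_nonneg_left h5' hL0.le)
  have hkey : t / 2 ≤ L * D := by linarith [h4, h8, h7]
  have hgoal : t / (2 * L) ≤ D := by
    rw [div_le_iff₀ (by positivity)]
    nlinarith [hkey]
  refine ⟨hgoal, fun _ => ?_⟩
  have : 0 < D := lt_of_lt_of_le (by positivity) hgoal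
  rw [hD_def, dist_comm] at this
  exact fun h => by simp [h] at this
end

section
/- Let X and Y be metric spaces, let x ∈ X, y ∈ Y, s > 0, λ ≥ 1 and R > 0. Suppose T : B(x,s) → Y is a map with T(x) = y, with d(T(a),T(b)) = d(a,b) for all a,b ∈ B(x,s), and with T(B(x,s)) = B(y,s). If the ball B(x,R) is a (λ,R)-linearly locally contractible subset of X, then the ball B(y,R̂) is a (λ,R̂)-linearly locally contractible subset of Y, where R̂ = min{R, s/(3λ)}. -/
open Metric Set
open scoped NNReal Topology

/-- **Lemmas 5.1 and 5.3 (transfer of linear local contractibility along ball isometries).**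
If `T` maps `B(x,s)` isometrically onto `B(y,s)` with `T(x) = y`, and `B(x,R)` is a
`(λ,R)`-linearly locally contractible subset of `X`, then `B(y,R̂)` is a `(λ,R̂)`-linearly
locally contractible subset of `Y`, where `R̂ = min{R, s/(3λ)}`. -/
theorem llc_transfers_along_ball_isometry
    {X Y : Type*} [MetricSpace X] [MetricSpace Y]
    (x : X) (y : Y) (s lam R : ℝ) (hs : 0 < s) (hlam : 1 ≤ lam) (hR : 0 < R)
    (T : X → Y) (hTx : T x = y)
    (hiso : ∀ a ∈ Metric.ball x s, ∀ b ∈ Metric.ball x s, dist (T a) (T b) = dist a b)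
    (hsurj : T '' Metric.ball x s = Metric.ball y s)
    (hllc : IsLLCSubset lam R (Metric.ball x R)) :
    IsLLCSubset lam (min R (s / (3 * lam))) (Metric.ball y (min R (s / (3 * lam)))) := by
  intro y' hy' r hr hrR
  haveI : Nonempty X := ⟨x⟩
  set Rh := min R (s / (3 * lam)) with hRh
  have hlam0 : (0:ℝ) < lam := lt_of_lt_of_le one_pos hlam
  have h3l : (0:ℝ) < 3 * lam := by positivity
  have hRhs : Rh ≤ s / (3 * lam) := min_le_right _ _
  have hRhR : Rh ≤ R := min_le_left _ _
  have hls : lam * (s / (3 * lam)) = s / 3 := by field_simp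
  have hs3 : s / (3 * lam) ≤ s / 3 := by
    calc s / (3 * lam) ≤ lam * (s / (3 * lam)) := le_mul_of_one_le_left (by positivity) hlam
    _ = s / 3 := hls
  have hxs : x ∈ Metric.ball x s := mem_ball_self hs
  set g := Function.invFunOn T (Metric.ball x s) with hgdef
  have hg : ∀ z ∈ Metric.ball y s, g z ∈ Metric.ball x s ∧ T (g z) = z := by
    intro z hz
    have : z ∈ T '' Metric.ball x s := hsurj ▸ hz
    obtain ⟨a, ha, rfl⟩ := this
    exact ⟨Function.invFunOn_mem ⟨a, ha, rfl⟩, Function.invFunOn_eq ⟨a, ha, rfl⟩⟩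
  have hy'Rh : dist y' y < Rh := mem_ball.mp hy'
  have hy's : y' ∈ Metric.ball y s := by
    have : Rh < s := lt_of_le_of_lt hRhs (lt_of_le_of_lt hs3 (by linarith))
    exact mem_ball.mpr (lt_trans hy'Rh this)
  set x' := g y' with hx'def
  have hx's : x' ∈ Metric.ball x s := (hg y' hy's).1
  have hTx' : T x' = y' := (hg y' hy's).2
  have hxx' : dist x' x = dist y' y := by
    rw [← hiso x' hx's x hxs, hTx', hTx]
  have hx'R : x' ∈ Metric.ball x R := by
    rw [mem_ball, hxx']; exact lt_of_lt_of_le hy'Rh hRhR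
  obtain ⟨p, H, hHc, hH0, hH1, hHin⟩ := hllc x' hx'R r hr (lt_of_lt_of_le hrR hRhR)
  -- helpful ball inclusions
  have hball1 : ∀ z ∈ Metric.ball y' r, z ∈ Metric.ball y s := by
    intro z hz
    have h1 : dist z y ≤ dist z y' + dist y' y := dist_triangle _ _ _
    have h2 : dist z y' < r := mem_ball.mp hz
    have : r < s / (3 * lam) := lt_of_lt_of_le hrR hRhs
    have : dist z y < s / (3 * lam) + s / (3 * lam) := by
      have := lt_of_lt_of_le hy'Rh hRhs; linarith
    exact mem_ball.mpr (by linarith)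
  have hball2 : ∀ z ∈ Metric.ball y' r, g z ∈ Metric.ball x' r := by
    intro z hz
    have hzs := hball1 z hz
    have : dist (g z) x' = dist z y' := by
      rw [← hiso (g z) (hg z hzs).1 x' hx's, (hg z hzs).2, hTx']
    rw [mem_ball, this]; exact mem_ball.mp hz
  have hlamr : lam * r < s / 3 := by
    calc lam * r < lam * (s / (3 * lam)) := by
          exact mul_lt_mul_of_pos_left (lt_of_lt_of_le hrR hRhs) hlam0
    _ = s / 3 := hls
  have hball3 : ∀ w ∈ Metric.ball x' (lam * r), w ∈ Metric.ball x s := by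
    intro w hw
    have h1 : dist w x ≤ dist w x' + dist x' x := dist_triangle _ _ _
    have h2 : dist w x' < lam * r := mem_ball.mp hw
    have h3 : dist x' x < s / 3 := by
      rw [hxx']; exact lt_of_lt_of_le hy'Rh (le_trans hRhs hs3)
    exact mem_ball.mpr (by linarith)
  have hball4 : ∀ w ∈ Metric.ball x' (lam * r), T w ∈ Metric.ball y' (lam * r) := by
    intro w hw
    have : dist (T w) y' = dist w x' := by
      rw [← hTx', hiso w (hball3 w hw) x' hx's]
    rw [mem_ball, this]; exact mem_ball.mp hw
  -- continuity of T and g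
  have hTc : ContinuousOn T (Metric.ball x s) := by
    refine (LipschitzOnWith.of_dist_le_mul (K := 1) ?_).continuousOn
    intro a ha b hb; rw [hiso a ha b hb]; simp
  have hgc : ContinuousOn g (Metric.ball y s) := by
    refine (LipschitzOnWith.of_dist_le_mul (K := 1) ?_).continuousOn
    intro a ha b hb
    rw [← hiso _ (hg a ha).1 _ (hg b hb).1, (hg a ha).2, (hg b hb).2]; simp
  refine ⟨T p, fun q => T (H (q.1, g q.2)), ?_, ?_, ?_, ?_⟩
  · have hmap1 : ContinuousOn (fun q : ℝ × Y => (q.1, g q.2))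
        (Set.Icc (0:ℝ) 1 ×ˢ Metric.ball y' r) :=
      continuousOn_fst.prodMk (hgc.comp continuousOn_snd fun q hq => hball1 q.2 hq.2)
    have hHc' : ContinuousOn (fun q : ℝ × Y => H (q.1, g q.2))
        (Set.Icc (0:ℝ) 1 ×ˢ Metric.ball y' r) :=
      hHc.comp hmap1 fun q hq => ⟨hq.1, hball2 q.2 hq.2⟩
    exact hTc.comp hHc' fun q hq => hball3 _ (hHin q.1 hq.1 _ (hball2 q.2 hq.2))
  · intro z hz
    simp only
    rw [hH0 _ (hball2 z hz), (hg z (hball1 z hz)).2]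
  · intro z hz
    simp only
    rw [hH1 _ (hball2 z hz)]
  · intro t ht z hz
    exact hball4 _ (hHin t ht _ (hball2 z hz))
end

section
/- Let n ≥ 1, let Y be a separable metric space, let X be a metric space, and let π : Y → X be a surjective map such that for every y ∈ Y there exists r > 0 with d(π(a),π(b)) = d(a,b) for all a,b ∈ B(y,r) and π(B(y,r)) = B(π(y),r). If Y is n-rectifiable, then X is n-rectifiable. -/
open Metric Set MeasureTheory
open scoped NNReal Topology ENNReal

/-- A metric space `X` is `n`-rectifiable if there are countably many compact sets
`K i ⊆ ℝⁿ` and maps `φ i : K i → X` that are bi-Lipschitz onto their images, whose images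
cover `X` up to a set of `ℋⁿ`-measure zero. -/
def IsNRectifiable (n : ℕ) (X : Type*) [MetricSpace X] [MeasurableSpace X] [BorelSpace X] :
    Prop :=
  ∃ (K : ℕ → Set (EuclideanSpace ℝ (Fin n))) (φ : ℕ → EuclideanSpace ℝ (Fin n) → X),
    (∀ i, IsCompact (K i)) ∧
    (∀ i, ∃ L : ℝ, 1 ≤ L ∧ ∀ a ∈ K i, ∀ b ∈ K i,
      L⁻¹ * ‖a - b‖ ≤ dist (φ i a) (φ i b) ∧ dist (φ i a) (φ i b) ≤ L * ‖a - b‖) ∧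
    μH[(n : ℝ)] ((Set.univ : Set X) \ ⋃ i, (φ i) '' (K i)) = 0

/-- **Rectifiability descends along surjective local isometries.** If `π : Y → X` is
surjective, every point of the separable space `Y` has a ball mapped isometrically by `π`
onto a ball of the same radius, and `Y` is `n`-rectifiable, then `X` is `n`-rectifiable. -/
theorem rectifiable_of_surjective_local_isometry
    (n : ℕ) (hn : 1 ≤ n)
    {Y : Type*} [MetricSpace Y] [MeasurableSpace Y] [BorelSpace Y]
    [TopologicalSpace.SeparableSpace Y]
    {X : Type*} [MetricSpace X] [MeasurableSpace X] [BorelSpace X]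
    (π : Y → X) (hsurj : Function.Surjective π)
    (hloc : ∀ y : Y, ∃ r : ℝ, 0 < r ∧
      (∀ a ∈ Metric.ball y r, ∀ b ∈ Metric.ball y r, dist (π a) (π b) = dist a b) ∧
      π '' Metric.ball y r = Metric.ball (π y) r)
    (hY : IsNRectifiable n Y) :
    IsNRectifiable n X := by
  classical
  obtain ⟨K, φ, hKc, hKL, hKm⟩ := hY
  haveI : Nonempty Y := ⟨φ 0 0⟩
  choose r hr0 hiso himg using hloc
  haveI : SecondCountableTopology Y := UniformSpace.secondCountable_of_separable Y
  obtain ⟨t, htc, htu⟩ := TopologicalSpace.countable_cover_nhds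
    (f := fun y => Metric.ball y (r y / 2)) (fun y => Metric.ball_mem_nhds y (half_pos (hr0 y)))
  have htne : t.Nonempty := by
    rcases Set.eq_empty_or_nonempty t with h | h
    · exfalso
      have : (Classical.arbitrary Y) ∈ ⋃ y ∈ t, Metric.ball y (r y / 2) :=
        htu ▸ Set.mem_univ _
      simp [h] at this
    · exact h
  obtain ⟨c, hc⟩ := htc.exists_eq_range htne
  -- the doubly-indexed family
  set e := (Denumerable.eqv (ℕ × ℕ)).symm with he
  set K' : ℕ × ℕ → Set (EuclideanSpace ℝ (Fin n)) := fun p =>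
    K p.1 ∩ (φ p.1) ⁻¹' Metric.closedBall (c p.2) (r (c p.2) / 2) with hK'
  set φ' : ℕ × ℕ → EuclideanSpace ℝ (Fin n) → X := fun p => π ∘ φ p.1 with hφ'
  refine ⟨fun i => K' (e i), fun i => φ' (e i), fun i => ?_, fun i => ?_, ?_⟩
  · -- compactness
    obtain ⟨L, hL1, hL⟩ := hKL (e i).1
    have hLip : LipschitzOnWith L.toNNReal (φ (e i).1) (K (e i).1) := by
      apply LipschitzOnWith.of_dist_le_mul
      intro a ha b hb
      have := (hL a ha b hb).2
      rwa [Real.coe_toNNReal L (by linarith), dist_eq_norm] 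
    have hcont : ContinuousOn (φ (e i).1) (K (e i).1) := hLip.continuousOn
    have hclosed : IsClosed (K' (e i)) :=
      hcont.preimage_isClosed_of_isClosed (hKc (e i).1).isClosed Metric.isClosed_closedBall
    exact (hKc (e i).1).of_isClosed_subset hclosed Set.inter_subset_left
  · -- bi-Lipschitz
    obtain ⟨L, hL1, hL⟩ := hKL (e i).1
    refine ⟨L, hL1, fun a ha b hb => ?_⟩
    have hmem : ∀ x ∈ K' (e i), φ (e i).1 x ∈ Metric.ball (c (e i).2) (r (c (e i).2)) := by
      intro x hx
      exact Metric.closedBall_subset_ball (by linarith [hr0 (c (e i).2)]) hx.2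
    have heq : dist (φ' (e i) a) (φ' (e i) b) = dist (φ (e i).1 a) (φ (e i).1 b) :=
      hiso (c (e i).2) _ (hmem a ha) _ (hmem b hb)
    rw [heq]
    exact hL a ha.1 b hb.1
  · -- null complement
    set N : Set Y := (Set.univ : Set Y) \ ⋃ i, (φ i) '' (K i) with hN
    have hsub : ((Set.univ : Set X) \ ⋃ i, (φ' (e i)) '' (K' (e i))) ⊆
        ⋃ j, π '' (N ∩ Metric.ball (c j) (r (c j))) := by
      rintro x ⟨-, hx⟩
      obtain ⟨y, rfl⟩ := hsurj x
      have hy : y ∈ ⋃ z ∈ t, Metric.ball z (r z / 2) := htu ▸ Set.mem_univ _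
      simp only [Set.mem_iUnion] at hy
      obtain ⟨z, hzt, hyz⟩ := hy
      obtain ⟨j, rfl⟩ : ∃ j, c j = z := by
        have : z ∈ Set.range c := hc ▸ hzt
        obtain ⟨j, hj⟩ := this
        exact ⟨j, hj⟩
      have hyN : y ∈ N := by
        constructor
        · trivial
        · intro hyU
          simp only [Set.mem_iUnion] at hyU
          obtain ⟨i0, a, haK, ha⟩ := hyU
          apply hx
          refine Set.mem_iUnion.2 ⟨e.symm (i0, j), ?_⟩
          refine ⟨a, ⟨?_, ?_⟩, ?_⟩
          · simpa using haK
          · simp only [Equiv.apply_symm_apply, Set.mem_preimage]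
            rw [ha]
            exact Metric.ball_subset_closedBall hyz
          · simp only [hφ', Equiv.apply_symm_apply, Function.comp_apply]
            rw [ha]
      exact Set.mem_iUnion.2 ⟨j, ⟨y, ⟨hyN, Metric.ball_subset_ball (by linarith [hr0 (c j)]) hyz⟩, rfl⟩⟩
    refine measure_mono_null hsub ?_
    refine measure_iUnion_null fun j => ?_
    have hlip : LipschitzOnWith 1 π (Metric.ball (c j) (r (c j))) := by
      apply LipschitzOnWith.of_dist_le_mul
      intro a ha b hb
      rw [hiso (c j) a ha b hb, NNReal.coe_one, one_mul]
    have := (hlip.mono Set.inter_subset_right).hausdorffMeasure_image_le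
      (d := (n : ℝ)) (Nat.cast_nonneg n) (s := N ∩ Metric.ball (c j) (r (c j)))
    refine le_antisymm (le_trans this ?_) zero_le
    have hNnull : μH[(n : ℝ)] (N ∩ Metric.ball (c j) (r (c j))) = 0 :=
      measure_mono_null Set.inter_subset_left hKm
    simp [hNnull]
end
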